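/- arXiv:1103.2534 — 3 statements merged into one kernel-verified Lean document; each statement's English description precedes it below -/
import Mathlib

section
/- Let X be a Lévy process in R^d with characteristic exponent Ψ, and set κ_ε(t) := P{X(t) ∈ B(0,ε)}. Define the scaled Pólya kernel P_ε(x) := ∏_{j=1}^d (1 − cos(2εx_j))/(2πε x_j²) for x ∈ R^d. Then for all ε > 0 and all t ∈ R, κ_ε(|t|) ≤ 2^d ∫_{R^d} P_ε(y) exp(−|t| Ψ(sgn(t) y)) dy. -/
open MeasureTheory ProbabilityTheory Filter Set Metric Bornology
open scoped ENNReal NNReal Topology symmDiff Real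

noncomputable section

/-- A Lévy process with values in a normed group `E`: it starts from `0`, has stationary
and independent increments, and almost surely càdlàg paths on `[0,∞)`. -/
structure IsLevyProcess {Ω E : Type*} [MeasurableSpace Ω]
    [NormedAddCommGroup E] [MeasurableSpace E] [BorelSpace E]
    (P : Measure Ω) (X : ℝ → Ω → E) : Prop where
  isProb : IsProbabilityMeasure P
  meas : ∀ t, Measurable (X t)
  zero : ∀ᵐ ω ∂P, X 0 ω = 0
  stationary : ∀ s t : ℝ, 0 ≤ s → s ≤ t →
    Measure.map (fun ω => X t ω - X s ω) P = Measure.map (X (t - s)) P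
  indep : ∀ (n : ℕ) (u : ℕ → ℝ), (∀ i, 0 ≤ u i) → Monotone u →
    iIndepFun
      (fun (i : Fin n) (ω : Ω) => X (u (i.1 + 1)) ω - X (u i.1) ω) P
  cadlag : ∀ᵐ ω ∂P, ∀ t : ℝ, 0 ≤ t →
    ContinuousWithinAt (fun s => X s ω) (Ici t) t ∧
      (0 < t → ∃ l : E, Tendsto (fun s => X s ω) (nhdsWithin t (Iio t)) (nhds l))

/-- A subordinator: a real-valued Lévy process with nondecreasing sample paths. -/
structure IsSubordinator {Ω : Type*} [MeasurableSpace Ω]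
    (P : Measure Ω) (S : ℝ → Ω → ℝ) : Prop where
  levy : IsLevyProcess P S
  mono : ∀ᵐ ω ∂P, MonotoneOn (fun t => S t ω) (Ici 0)

/-- `kappa P X ε t = P{X(t) ∈ B(0,ε)}`, where `B(0,ε)` is the open ℓ^∞ ball
(the sup-norm ball of `Fin d → ℝ`). -/
def kappa {Ω : Type*} [MeasurableSpace Ω] {d : ℕ}
    (P : Measure Ω) (X : ℝ → Ω → (Fin d → ℝ)) (ε t : ℝ) : ℝ :=
  (P {ω | X t ω ∈ Metric.ball (0 : Fin d → ℝ) ε}).toReal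

/-- Borel probability measures on `ℝ` giving full mass to `F`. -/
def ProbOn (F : Set ℝ) : Set (Measure ℝ) := {ν | IsProbabilityMeasure ν ∧ ν F = 1}

/-- Compactly supported Borel probability measures on `ℝ` giving full mass to `F`. -/
def ProbOnC (F : Set ℝ) : Set (Measure ℝ) :=
  {ν | IsProbabilityMeasure ν ∧ ν F = 1 ∧ ∃ K : Set ℝ, IsCompact K ∧ ν K = 1}

/-- The box-dimension profile `Dim̄_κ F` of `F` with respect to a family `κ = {κ_ε}`:
`sup {η > 0 : liminf_{ε↓0} inf_{ν ∈ P(F)} ∫∫ κ_ε(|t-s|) ε^{-η} ν(ds) ν(dt) = 0}`,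
with `sup ∅ = 0` (the convention of `Real.sSup`). -/
def boxDimProfile (κ : ℝ → ℝ → ℝ) (F : Set ℝ) : ℝ :=
  sSup {η : ℝ | 0 < η ∧
    Filter.liminf
      (fun ε : ℝ => ⨅ ν : ProbOn F, ∫ t, ∫ s, κ ε |t - s| / ε ^ η ∂ν.1 ∂ν.1)
      (nhdsWithin 0 (Set.Ioi 0)) = 0}

/-- The packing dimension profile `Dim_κ F`: the infimum over all countable coverings of `F`
by bounded Borel sets `F n` of `sup_n Dim̄_κ (F n)`. -/
def packDimProfile (κ : ℝ → ℝ → ℝ) (F : Set ℝ) : ℝ :=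
  ⨅ c : {c : ℕ → Set ℝ //
      (∀ n, Bornology.IsBounded (c n) ∧ MeasurableSet (c n)) ∧ F ⊆ ⋃ n, c n},
    ⨆ n, boxDimProfile κ (c.1 n)

/-- Howroyd's `s`-dimensional box-dimension profile `B-Dim̄_s G`, defined through the kernel
`min{1, (ε/|t-u|)^s}` (equal to `1` on the diagonal `t = u`). -/
def bBoxProfile (s : ℝ) (G : Set ℝ) : ℝ :=
  sSup {η : ℝ | 0 < η ∧
    Filter.liminf
      (fun ε : ℝ =>
        (⨅ ν : ProbOn G,
          ∫ t, ∫ u, (if t = u then 1 else min 1 ((ε / |t - u|) ^ s)) ∂ν.1 ∂ν.1) / ε ^ η)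
      (nhdsWithin 0 (Set.Ioi 0)) = 0}

/-- The Falconer–Howroyd `s`-dimensional packing dimension profile `Dim^{FH}_s F`,
realized as the regularization of Howroyd's box-dimension profile `B-Dim̄_s`. -/
def fhDimProfile (s : ℝ) (F : Set ℝ) : ℝ :=
  ⨅ c : {c : ℕ → Set ℝ //
      (∀ n, Bornology.IsBounded (c n) ∧ MeasurableSet (c n)) ∧ F ⊆ ⋃ n, c n},
    ⨆ n, bBoxProfile s (c.1 n)

/-- The Kolmogorov capacity `K_G(r)`: the maximal number of points of `G`
with pairwise distances at least `r`. -/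
def kolmCap {E : Type*} [PseudoMetricSpace E] (G : Set E) (r : ℝ) : ℝ≥0∞ :=
  ⨆ (s : Finset E) (_ : ↑s ⊆ G ∧ (s : Set E).Pairwise fun x y => r ≤ dist x y),
    (s.card : ℝ≥0∞)

/-- The upper Minkowski dimension `dim̄_M G = limsup_{r↓0} log K_G(r) / log(1/r)`. -/
def upperMinkowskiDim {E : Type*} [PseudoMetricSpace E] (G : Set E) : ℝ :=
  Filter.limsup
    (fun r : ℝ => Real.log (kolmCap G r).toReal / Real.log (1 / r))
    (nhdsWithin 0 (Set.Ioi 0))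

/-- The packing dimension, via Tricot's regularization of the upper Minkowski dimension. -/
def packingDim {E : Type*} [PseudoMetricSpace E] (G : Set E) : ℝ :=
  ⨅ c : {c : ℕ → Set E // (∀ n, Bornology.IsBounded (c n)) ∧ G ⊆ ⋃ n, c n},
    ⨆ n, upperMinkowskiDim (c.1 n)

/-- The energy form `E_ν(z) = ∫∫ exp(-|t-s| Ψ(sgn(t-s) z)) ν(ds) ν(dt)`. -/
def energyForm {d : ℕ} (Ψ : (Fin d → ℝ) → ℂ) (ν : Measure ℝ) (z : Fin d → ℝ) : ℂ :=
  ∫ t, ∫ s, Complex.exp (-(|t - s| : ℝ) * Ψ (Real.sign (t - s) • z)) ∂ν ∂ν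

/-- The scaled Pólya kernel `P_ε(x) = ∏_j (1 - cos(2εx_j)) / (2πε x_j²)`. -/
def polyaKernel {d : ℕ} (ε : ℝ) (x : Fin d → ℝ) : ℝ :=
  ∏ j, (1 - Real.cos (2 * ε * x j)) / (2 * π * ε * (x j) ^ 2)

/-- The standard Cauchy density on `ℝ^d`, `f_C(z) = π^{-d} ∏_j (1 + z_j²)⁻¹`. -/
def cauchyDensity {d : ℕ} (z : Fin d → ℝ) : ℝ :=
  (π : ℝ)⁻¹ ^ d * ∏ j, (1 + (z j) ^ 2)⁻¹


namespace KappaPolyaAux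

open MeasureTheory Complex
open scoped Real FourierTransform

/-- The 1-dimensional scaled Pólya (Fejér) kernel. -/
noncomputable def pk (ε u : ℝ) : ℝ := (1 - Real.cos (2 * ε * u)) / (2 * π * ε * u ^ 2)

/-- The triangle function, Fourier transform of `pk ε`. -/
noncomputable def tri (ε u : ℝ) : ℝ := max 0 (1 - |u| / (2 * ε))

lemma one_sub_cos_nonneg (x : ℝ) : 0 ≤ 1 - Real.cos x := by
  nlinarith [Real.cos_le_one x]

lemma one_sub_cos_le_two (x : ℝ) : 1 - Real.cos x ≤ 2 := by
  nlinarith [Real.neg_one_le_cos x]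

lemma one_sub_cos_le_sq (x : ℝ) : 1 - Real.cos x ≤ x ^ 2 / 2 := by
  have h1 := Real.cos_two_mul (x / 2)
  have h2 := Real.sin_sq_add_cos_sq (x / 2)
  have h3 : 2 * (x / 2) = x := by ring
  rw [h3] at h1
  have h4 : Real.sin (x / 2) ^ 2 ≤ (x / 2) ^ 2 := Real.sin_sq_le_sq
  nlinarith

lemma pk_nonneg {ε : ℝ} (hε : 0 < ε) (u : ℝ) : 0 ≤ pk ε u := by
  unfold pk
  apply div_nonneg (one_sub_cos_nonneg _)
  positivity

/-- Core integrability fact. -/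
lemma integrable_one_sub_cos_div_sq (c : ℝ) :
    Integrable (fun y : ℝ => (1 - Real.cos (c * y)) / y ^ 2) := by
  have hmeas : AEStronglyMeasurable (fun y : ℝ => (1 - Real.cos (c * y)) / y ^ 2)
      (volume : Measure ℝ) := by
    apply Measurable.aestronglyMeasurable
    exact (measurable_const.sub (Real.measurable_cos.comp (measurable_id.const_mul c))).div
      (measurable_id.pow_const 2)
  have hb : Integrable (fun y : ℝ => (c ^ 2 + 2) * (1 + y ^ 2)⁻¹) :=
    integrable_inv_one_add_sq.const_mul _
  refine hb.mono' hmeas (Filter.Eventually.of_forall fun y => ?_)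
  rcases eq_or_ne y 0 with rfl | hy
  · simp
    positivity
  · have h1 : 0 ≤ 1 - Real.cos (c * y) := one_sub_cos_nonneg _
    have h2 : 1 - Real.cos (c * y) ≤ 2 := one_sub_cos_le_two _
    have h3 : 1 - Real.cos (c * y) ≤ (c * y) ^ 2 / 2 := one_sub_cos_le_sq _
    have hy2 : (0:ℝ) < y ^ 2 := by positivity
    have hy3 : (0:ℝ) < 1 + y ^ 2 := by positivity
    rw [Real.norm_eq_abs, abs_div, _root_.abs_of_nonneg h1, _root_.abs_of_nonneg hy2.le,
      ← one_div, mul_one_div, div_le_div_iff₀ hy2 hy3]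
    nlinarith [sq_nonneg (c * y)]

lemma pk_integrable {ε : ℝ} (hε : 0 < ε) : Integrable (pk ε) := by
  have h := (integrable_one_sub_cos_div_sq (2 * ε)).const_mul ((2 * π * ε)⁻¹)
  refine h.congr (Filter.Eventually.of_forall fun y => ?_)
  show (2 * π * ε)⁻¹ * ((1 - Real.cos (2 * ε * y)) / y ^ 2) = pk ε y
  unfold pk
  rw [inv_mul_eq_div, div_div, mul_comm (y ^ 2) (2 * π * ε)]

lemma tri_nonneg (ε u : ℝ) : 0 ≤ tri ε u := le_max_left _ _

lemma tri_le_one {ε : ℝ} (hε : 0 < ε) (u : ℝ) : tri ε u ≤ 1 := by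
  have : 0 ≤ |u| / (2 * ε) := by positivity
  unfold tri
  apply max_le (by norm_num) (by linarith)

lemma half_le_tri {ε : ℝ} (hε : 0 < ε) {u : ℝ} (h : |u| ≤ ε) : 1 / 2 ≤ tri ε u := by
  have h2 : |u| / (2 * ε) ≤ 1 / 2 := by
    rw [div_le_iff₀ (by positivity)]
    linarith
  exact le_trans (by linarith) (le_max_right 0 _)

lemma tri_continuous (ε : ℝ) : Continuous (tri ε) :=
  continuous_const.max (continuous_const.sub (continuous_abs.div_const _))

lemma tri_eq_zero {ε u : ℝ} (hε : 0 < ε) (h : 2 * ε ≤ |u|) : tri ε u = 0 := by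
  have : 1 - |u| / (2 * ε) ≤ 0 := by
    rw [sub_nonpos, le_div_iff₀ (by positivity)]
    linarith
  exact max_eq_left this

lemma tri_hcs {ε : ℝ} (hε : 0 < ε) : HasCompactSupport (tri ε) := by
  apply HasCompactSupport.intro (isCompact_Icc (a := -(2 * ε)) (b := 2 * ε))
  intro u hu
  apply tri_eq_zero hε
  rw [Set.mem_Icc, ← abs_le] at hu
  exact (not_le.mp hu).le

lemma tri_even (ε u : ℝ) : tri ε (-u) = tri ε u := by unfold tri; rw [abs_neg]

/-- Interval computation: `∫ tri ε v * cos (w v) dv = (1 - cos (2 ε w))/(ε w²)` for `w ≠ 0`. -/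
lemma integral_tri_cos {ε : ℝ} (hε : 0 < ε) {w : ℝ} (hw : w ≠ 0) :
    ∫ v : ℝ, tri ε v * Real.cos (w * v) = (1 - Real.cos (2 * ε * w)) / (ε * w ^ 2) := by
  have h2ε : (0:ℝ) < 2 * ε := by linarith
  have hcont : Continuous fun v : ℝ => tri ε v * Real.cos (w * v) :=
    (tri_continuous ε).mul (Real.continuous_cos.comp (continuous_const.mul continuous_id))
  have hsupp : Function.support (fun v : ℝ => tri ε v * Real.cos (w * v))
      ⊆ Set.Ioc (-(2 * ε)) (2 * ε) := by
    intro v hv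
    by_contra hmem
    apply hv
    have : 2 * ε ≤ |v| := by
      rcases le_or_gt v (-(2 * ε)) with h | h
      · rw [abs_of_nonpos (by linarith)]; linarith
      · rcases le_or_gt v (2 * ε) with h' | h'
        · exact absurd ⟨h, h'⟩ hmem
        · rw [abs_of_pos (by linarith)]; linarith
    simp only [tri_eq_zero hε this, zero_mul]
  rw [← intervalIntegral.integral_eq_integral_of_support_subset hsupp]
  have hint : ∀ a b : ℝ, IntervalIntegrable (fun v : ℝ => tri ε v * Real.cos (w * v))
      volume a b := fun a b => hcont.intervalIntegrable a b
  have hsplit := intervalIntegral.integral_add_adjacent_intervals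
    (hint (-(2 * ε)) 0) (hint 0 (2 * ε))
  rw [← hsplit]
  have hneg : (∫ v in (-(2 * ε))..0, tri ε v * Real.cos (w * v))
      = ∫ v in (0:ℝ)..(2 * ε), tri ε v * Real.cos (w * v) := by
    have := intervalIntegral.integral_comp_neg (a := (0:ℝ)) (b := 2 * ε)
      (fun v : ℝ => tri ε v * Real.cos (w * v))
    rw [neg_zero] at this
    rw [← this]
    apply intervalIntegral.integral_congr
    intro v _
    simp only [tri_even, mul_neg, Real.cos_neg]
  rw [hneg]
  have hcongr : (∫ v in (0:ℝ)..(2 * ε), tri ε v * Real.cos (w * v))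
      = ∫ v in (0:ℝ)..(2 * ε), (1 - v / (2 * ε)) * Real.cos (w * v) := by
    apply intervalIntegral.integral_congr
    intro v hv
    rw [Set.uIcc_of_le h2ε.le, Set.mem_Icc] at hv
    show tri ε v * Real.cos (w * v) = (1 - v / (2 * ε)) * Real.cos (w * v)
    unfold tri
    rw [_root_.abs_of_nonneg hv.1, max_eq_right]
    rw [sub_nonneg, div_le_one (by positivity)]
    exact hv.2
  rw [hcongr]
  have hderiv : ∀ u ∈ Set.uIcc (0:ℝ) (2 * ε),
      HasDerivAt (fun u : ℝ => Real.sin (w * u) / w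
        - (1 / (2 * ε)) * (u * Real.sin (w * u) / w + Real.cos (w * u) / w ^ 2))
        ((1 - u / (2 * ε)) * Real.cos (w * u)) u := by
    intro u _
    have hwu : HasDerivAt (fun u : ℝ => w * u) w u := by
      simpa using (hasDerivAt_id u).const_mul w
    have hsin : HasDerivAt (fun u : ℝ => Real.sin (w * u)) (Real.cos (w * u) * w) u :=
      (Real.hasDerivAt_sin (w * u)).comp u hwu
    have hcos : HasDerivAt (fun u : ℝ => Real.cos (w * u)) (-Real.sin (w * u) * w) u :=
      (Real.hasDerivAt_cos (w * u)).comp u hwu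
    have h1 := hsin.div_const w
    have h2 := ((hasDerivAt_id u).mul hsin).div_const w
    have h3 := hcos.div_const (w ^ 2)
    have h4 := (h2.add h3).const_mul (1 / (2 * ε))
    have h5 := h1.sub h4
    refine h5.congr_deriv ?_
    simp only [id]
    field_simp
    ring
  rw [intervalIntegral.integral_eq_sub_of_hasDerivAt hderiv
    (((continuous_const.sub (continuous_id.div_const _)).mul
      (Real.continuous_cos.comp (continuous_const.mul continuous_id))).intervalIntegrable _ _)]
  rw [mul_zero, Real.sin_zero, Real.cos_zero]
  have h2εw : 2 * ε * w = w * (2 * ε) := by ring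
  rw [h2εw]
  field_simp
  ring


lemma myIntegralOfReal {X : Type*} [MeasurableSpace X] {μ : Measure X} {f : X → ℝ} :
    ∫ x, ((f x : ℝ) : ℂ) ∂μ = ((∫ x, f x ∂μ : ℝ) : ℂ) := integral_ofReal

lemma hcs_mul {f g : ℝ → ℝ} (hf : HasCompactSupport f) :
    HasCompactSupport (fun v => f v * g v) := hf.mul_right

/-- The triangle function as a complex-valued function. -/
noncomputable def ftri (ε : ℝ) : ℝ → ℂ := fun u => ((tri ε u : ℝ) : ℂ)

lemma ftri_integrable {ε : ℝ} (hε : 0 < ε) : Integrable (ftri ε) :=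
  ((tri_continuous ε).integrable_of_hasCompactSupport (tri_hcs hε)).ofReal

lemma fourier_ftri {ε : ℝ} (hε : 0 < ε) {y : ℝ} (hy : y ≠ 0) :
    𝓕 (ftri ε) y = (((1 - Real.cos (4 * π * ε * y)) / (4 * π ^ 2 * ε * y ^ 2) : ℝ) : ℂ) := by
  have hπ : (0:ℝ) < π := Real.pi_pos
  have hw : (2 * π * y) ≠ 0 := by
    intro h
    rcases mul_eq_zero.mp h with h' | h'
    · exact absurd h' (by positivity)
    · exact hy h'
  have hptw : ∀ v : ℝ, (𝐞 (-(v * y)) • ftri ε v : ℂ)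
      = ((tri ε v * Real.cos (2 * π * y * v) : ℝ) : ℂ)
        + ((-(tri ε v * Real.sin (2 * π * y * v)) : ℝ) : ℂ) * Complex.I := by
    intro v
    rw [Circle.smul_def, Real.fourierChar_apply]
    unfold ftri
    rw [show 2 * π * -(v * y) = -(2 * π * y * v) from by ring]
    rw [Complex.exp_mul_I]
    rw [← Complex.ofReal_cos, ← Complex.ofReal_sin]
    rw [Real.cos_neg, Real.sin_neg]
    rw [smul_eq_mul]
    push_cast
    ring
  have hS : (∫ v : ℝ, tri ε v * Real.sin (2 * π * y * v)) = 0 := by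
    have h1 := MeasureTheory.integral_neg_eq_self
      (fun v : ℝ => tri ε v * Real.sin (2 * π * y * v)) (volume : Measure ℝ)
    have h2 : (∫ v : ℝ, tri ε (-v) * Real.sin (2 * π * y * -v))
        = - ∫ v : ℝ, tri ε v * Real.sin (2 * π * y * v) := by
      rw [← integral_neg]
      congr 1
      funext v
      rw [tri_even, mul_neg, Real.sin_neg, mul_neg]
    rw [h2] at h1
    linarith
  have hC := integral_tri_cos hε hw
  have hia : Integrable fun v : ℝ => tri ε v * Real.cos (2 * π * y * v) :=
    ((tri_continuous ε).mul (Real.continuous_cos.comp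
      (continuous_const.mul continuous_id))).integrable_of_hasCompactSupport
      (hcs_mul (tri_hcs hε))
  have hib : Integrable fun v : ℝ => -(tri ε v * Real.sin (2 * π * y * v)) :=
    (((tri_continuous ε).mul (Real.continuous_sin.comp
      (continuous_const.mul continuous_id))).integrable_of_hasCompactSupport
      (hcs_mul (tri_hcs hε))).neg
  have hia' : Integrable (fun v : ℝ => ((tri ε v * Real.cos (2 * π * y * v) : ℝ) : ℂ)) :=
    hia.ofReal
  have hib' : Integrable
      (fun v : ℝ => ((-(tri ε v * Real.sin (2 * π * y * v)) : ℝ) : ℂ) * Complex.I) :=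
    hib.ofReal.mul_const _
  rw [Real.fourier_real_eq]
  rw [integral_congr_ae (Filter.Eventually.of_forall hptw)]
  rw [integral_add hia' hib', integral_mul_const, myIntegralOfReal, myIntegralOfReal,
    integral_neg, hS, neg_zero, Complex.ofReal_zero, zero_mul, add_zero, hC]
  norm_cast
  rw [show 2 * ε * (2 * π * y) = 4 * π * ε * y from by ring,
    show ε * (2 * π * y) ^ 2 = 4 * π ^ 2 * ε * y ^ 2 from by ring]

lemma g_integrable {ε : ℝ} (hε : 0 < ε) :
    Integrable (fun y : ℝ => (1 - Real.cos (4 * π * ε * y)) / (4 * π ^ 2 * ε * y ^ 2)) := by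
  have h := (integrable_one_sub_cos_div_sq (4 * π * ε)).const_mul ((4 * π ^ 2 * ε)⁻¹)
  refine h.congr (Filter.Eventually.of_forall fun y => ?_)
  show (4 * π ^ 2 * ε)⁻¹ * ((1 - Real.cos (4 * π * ε * y)) / y ^ 2) = _
  rw [inv_mul_eq_div, div_div, mul_comm (y ^ 2) _]

lemma ae_ne_zero : ∀ᵐ x : ℝ ∂(volume : Measure ℝ), x ≠ 0 := by
  have h1 : (volume : Measure ℝ) {(0:ℝ)} = 0 := measure_singleton 0
  have := MeasureTheory.compl_mem_ae_iff.mpr h1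
  filter_upwards [this] with x hx
  simpa using hx

lemma fourier_ftri_integrable {ε : ℝ} (hε : 0 < ε) : Integrable (𝓕 (ftri ε)) := by
  have hc : Continuous (𝓕 (ftri ε)) := by
    apply VectorFourier.fourierIntegral_continuous Real.continuous_fourierChar ?_
      (ftri_integrable hε)
    exact continuous_inner
  refine (g_integrable hε).mono' hc.aestronglyMeasurable ?_
  filter_upwards [ae_ne_zero] with y hy
  rw [fourier_ftri hε hy, Complex.norm_real, Real.norm_eq_abs,
    _root_.abs_of_nonneg (div_nonneg (one_sub_cos_nonneg _) (by positivity))]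

lemma oneDim {ε : ℝ} (hε : 0 < ε) (c : ℝ) :
    ∫ u : ℝ, ((pk ε u : ℝ) : ℂ) * Complex.exp (Complex.I * (c * u)) = ((tri ε c : ℝ) : ℂ) := by
  have hπ : (0:ℝ) < π := Real.pi_pos
  have h2π : (2 * π : ℝ) ≠ 0 := by positivity
  have hεne : ε ≠ 0 := hε.ne'
  have hinv : 𝓕⁻ (𝓕 (ftri ε)) c = ftri ε c :=
    MeasureTheory.Integrable.fourierInv_fourier_eq (ftri_integrable hε) (fourier_ftri_integrable hε)
      ((Complex.continuous_ofReal.comp (tri_continuous ε)).continuousAt)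
  rw [Real.fourierInv_eq_fourier_neg, Real.fourier_real_eq] at hinv
  set F : ℝ → ℂ := fun v => 𝐞 (-(v * -c)) • 𝓕 (ftri ε) v with hF
  have hcv := MeasureTheory.Measure.integral_comp_div F (2 * π)
  have hcong : ∫ x : ℝ, F (x / (2 * π))
      = ∫ x : ℝ, (2 * π : ℝ) • (((pk ε x : ℝ) : ℂ) * Complex.exp (Complex.I * (c * x))) := by
    refine integral_congr_ae ?_
    filter_upwards [ae_ne_zero] with x hx
    have hx2π : x / (2 * π) ≠ 0 := div_ne_zero hx h2π
    simp only [hF]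
    rw [Circle.smul_def, Real.fourierChar_apply, fourier_ftri hε hx2π]
    rw [show 2 * π * -(x / (2 * π) * -c) = c * x from by field_simp]
    rw [show 4 * π * ε * (x / (2 * π)) = 2 * ε * x from by field_simp; ring]
    rw [show (4 * π ^ 2 * ε * (x / (2 * π)) ^ 2) = ε * x ^ 2 from by field_simp; ring]
    have hval : (1 - Real.cos (2 * ε * x)) / (ε * x ^ 2) = 2 * π * pk ε x := by
      have hx2 : (0:ℝ) < x ^ 2 := by positivity
      unfold pk
      rw [mul_div_assoc']
      rw [div_eq_div_iff (by positivity) (by positivity)]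
      ring
    rw [hval]
    have hexp : (((c * x : ℝ)) : ℂ) * Complex.I = Complex.I * ((c : ℂ) * (x : ℂ)) := by
      push_cast; ring
    rw [hexp, Complex.real_smul, Complex.ofReal_mul, Complex.ofReal_mul, smul_eq_mul]
    ring
  rw [hcong, integral_smul, hinv, _root_.abs_of_pos (by positivity : (0:ℝ) < 2 * π)] at hcv
  have hfin := smul_right_injective ℂ h2π hcv
  rw [hfin]
  rfl

lemma norm_exp_I_mul_ofReal (r : ℝ) : ‖Complex.exp (Complex.I * (r : ℂ))‖ = 1 := by
  rw [mul_comm, Complex.norm_exp_ofReal_mul_I]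

lemma prodLemma {d : ℕ} {ε : ℝ} (hε : 0 < ε) (c : Fin d → ℝ) :
    ∫ y : Fin d → ℝ, ((polyaKernel ε y : ℝ) : ℂ)
        * Complex.exp (Complex.I * ∑ j, ((c j : ℝ) : ℂ) * ((y j : ℝ) : ℂ))
      = ((∏ j, tri ε (c j) : ℝ) : ℂ) := by
  have hpt : ∀ y : Fin d → ℝ, ((polyaKernel ε y : ℝ) : ℂ)
      * Complex.exp (Complex.I * ∑ j, ((c j : ℝ) : ℂ) * ((y j : ℝ) : ℂ))
      = ∏ j, (((pk ε (y j) : ℝ) : ℂ) * Complex.exp (Complex.I * (c j * y j))) := by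
    intro y
    rw [Finset.prod_mul_distrib]
    congr 1
    · rw [show polyaKernel ε y = ∏ j, pk ε (y j) from rfl, Complex.ofReal_prod]
    · rw [Finset.mul_sum, Complex.exp_sum]
  rw [integral_congr_ae (Filter.Eventually.of_forall hpt)]
  rw [MeasureTheory.integral_fintype_prod_volume_eq_prod (ι := Fin d)
    (f := fun (j : Fin d) (u : ℝ) => ((pk ε u : ℝ) : ℂ) * Complex.exp (Complex.I * (c j * u)))]
  rw [Complex.ofReal_prod]
  exact Finset.prod_congr rfl fun j _ => oneDim hε (c j)

end KappaPolyaAux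

/-- Upper bound for `κ_ε` in terms of the Pólya kernel: for all `ε > 0` and `t ∈ ℝ`,
`κ_ε(|t|) ≤ 2^d ∫ P_ε(y) exp(-|t| Ψ(sgn(t) y)) dy`. -/
theorem kappa_le_polya {Ω : Type*} [MeasurableSpace Ω] {d : ℕ}
    (P : Measure Ω) (X : ℝ → Ω → (Fin d → ℝ)) (hX : IsLevyProcess P X)
    (Ψ : (Fin d → ℝ) → ℂ)
    (hΨ : ∀ t : ℝ, 0 ≤ t → ∀ z : Fin d → ℝ,
      ∫ ω, Complex.exp (Complex.I * ∑ j, (z j : ℂ) * (X t ω j : ℂ)) ∂P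
        = Complex.exp (-(t : ℂ) * Ψ z))
    (ε : ℝ) (hε : 0 < ε) (t : ℝ) :
    kappa P X ε |t|
      ≤ 2 ^ d * (∫ y : Fin d → ℝ,
          polyaKernel ε y • Complex.exp (-((|t| : ℝ) : ℂ) * Ψ (Real.sign t • y))).re := by
  classical
  haveI : IsProbabilityMeasure P := hX.isProb
  have hT0 : (0:ℝ) ≤ |t| := abs_nonneg t
  set T : ℝ := |t| with hTdef
  set s : ℝ := Real.sign t with hsdef
  have hs1 : |s| ≤ 1 := by
    rcases lt_trichotomy t 0 with h | h | h
    · rw [hsdef, Real.sign_of_neg h]; norm_num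
    · rw [hsdef, h, Real.sign_zero]; norm_num
    · rw [hsdef, Real.sign_of_pos h]; norm_num
  have hXT : Measurable (X T) := hX.meas T
  set K : (Fin d → ℝ) → ℝ := polyaKernel ε with hKdef
  have hK0 : ∀ y, 0 ≤ K y := fun y =>
    Finset.prod_nonneg fun j _ => KappaPolyaAux.pk_nonneg hε (y j)
  have hKmeas : Measurable K := by
    apply Finset.measurable_prod
    intro j _
    exact (measurable_const.sub (Real.measurable_cos.comp
      (by fun_prop))).div
      (by fun_prop)
  have hKint : Integrable K := by
    have h := MeasureTheory.Integrable.fin_nat_prod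
      (f := fun (_ : Fin d) (u : ℝ) => KappaPolyaAux.pk ε u)
      (fun _ => KappaPolyaAux.pk_integrable hε)
    exact h
  set Φ : Ω → ℝ := fun ω => ∏ j, KappaPolyaAux.tri ε (s * X T ω j) with hΦdef
  have hΦ0 : ∀ ω, 0 ≤ Φ ω := fun ω =>
    Finset.prod_nonneg fun j _ => KappaPolyaAux.tri_nonneg _ _
  have hΦ1 : ∀ ω, Φ ω ≤ 1 := fun ω =>
    Finset.prod_le_one (fun j _ => KappaPolyaAux.tri_nonneg _ _)
      (fun j _ => KappaPolyaAux.tri_le_one hε _)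
  have hΦmeas : Measurable Φ := by
    apply Finset.measurable_prod
    intro j _
    exact (KappaPolyaAux.tri_continuous ε).measurable.comp
      (((measurable_pi_apply j).comp hXT).const_mul s)
  have hΦint : Integrable Φ P := by
    refine (integrable_const (1:ℝ)).mono' hΦmeas.aestronglyMeasurable
      (Filter.Eventually.of_forall fun ω => ?_)
    rw [Real.norm_eq_abs, _root_.abs_of_nonneg (hΦ0 ω)]
    exact hΦ1 ω
  have hA : MeasurableSet {ω | X T ω ∈ Metric.ball (0 : Fin d → ℝ) ε} :=
    hXT measurableSet_ball
  have step1 : kappa P X ε T ≤ 2 ^ d * ∫ ω, Φ ω ∂P := by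
    have hmono : ∫ ω, Set.indicator {ω | X T ω ∈ Metric.ball (0 : Fin d → ℝ) ε}
        (1 : Ω → ℝ) ω ∂P ≤ ∫ ω, 2 ^ d * Φ ω ∂P := by
      apply integral_mono ((integrable_const (1:ℝ)).indicator hA) (hΦint.const_mul _)
      intro ω
      by_cases hω : ω ∈ {ω | X T ω ∈ Metric.ball (0 : Fin d → ℝ) ε}
      · rw [Set.indicator_of_mem hω]
        show (1:ℝ) ≤ 2 ^ d * Φ ω
        have hb : ∀ j, |X T ω j| < ε := by
          intro j
          have h1 : dist (X T ω) (0 : Fin d → ℝ) < ε := hω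
          rw [dist_pi_lt_iff hε] at h1
          have h2 := h1 j
          rwa [Real.dist_eq, Pi.zero_apply, sub_zero] at h2
        have hfac : ∀ j, (1:ℝ)/2 ≤ KappaPolyaAux.tri ε (s * X T ω j) := by
          intro j
          apply KappaPolyaAux.half_le_tri hε
          calc |s * X T ω j| = |s| * |X T ω j| := abs_mul _ _
            _ ≤ 1 * |X T ω j| := mul_le_mul_of_nonneg_right hs1 (abs_nonneg _)
            _ ≤ ε := by rw [one_mul]; exact (hb j).le
        have hprod : ((1:ℝ)/2) ^ d ≤ Φ ω := by
          have h2 : ∏ _j : Fin d, ((1:ℝ)/2) ≤ ∏ j, KappaPolyaAux.tri ε (s * X T ω j) :=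
            Finset.prod_le_prod (fun j _ => by norm_num) (fun j _ => hfac j)
          simpa using h2
        have h2d : (0:ℝ) < 2 ^ d := by positivity
        have h1eq : (1:ℝ) = 2 ^ d * (1/2) ^ d := by
          rw [← mul_pow]; norm_num
        rw [h1eq]
        exact mul_le_mul_of_nonneg_left hprod h2d.le
      · rw [Set.indicator_of_notMem hω]
        show (0:ℝ) ≤ 2 ^ d * Φ ω
        exact mul_nonneg (by positivity) (hΦ0 ω)
    unfold kappa
    rw [← measureReal_def, ← MeasureTheory.integral_indicator_one hA]
    calc ∫ ω, Set.indicator {ω | X T ω ∈ Metric.ball (0 : Fin d → ℝ) ε} (1 : Ω → ℝ) ω ∂P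
        ≤ ∫ ω, 2 ^ d * Φ ω ∂P := hmono
      _ = 2 ^ d * ∫ ω, Φ ω ∂P := integral_const_mul _ _
  -- Step 2: identify ∫ Φ with the Fourier-side integral.
  set H : Ω → (Fin d → ℝ) → ℂ := fun ω y => ((K y : ℝ) : ℂ)
    * Complex.exp (Complex.I * ∑ j, (((s • y) j : ℝ) : ℂ) * ((X T ω j : ℝ) : ℂ)) with hHdef
  have hnormH : ∀ ω y, ‖H ω y‖ = K y := by
    intro ω y
    rw [hHdef]
    simp only
    have h1 : (∑ j, (((s • y) j : ℝ) : ℂ) * ((X T ω j : ℝ) : ℂ))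
        = ((∑ j, (s • y) j * X T ω j : ℝ) : ℂ) := by
      push_cast
      rfl
    rw [norm_mul, h1, KappaPolyaAux.norm_exp_I_mul_ofReal, mul_one, Complex.norm_real,
      Real.norm_eq_abs, _root_.abs_of_nonneg (hK0 y)]
  have hHmeas : Measurable (Function.uncurry H) := by
    have hg : Measurable fun q : Ω × (Fin d → ℝ) =>
        Complex.I * ∑ j, (((s • q.2) j : ℝ) : ℂ) * ((X T q.1 j : ℝ) : ℂ) := by
      apply Measurable.const_mul
      apply Finset.measurable_sum
      intro j _
      apply Measurable.mul
      · exact Complex.measurable_ofReal.comp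
          (by fun_prop)
      · exact Complex.measurable_ofReal.comp
          ((measurable_pi_apply j).comp (hXT.comp measurable_fst))
    exact ((Complex.measurable_ofReal.comp (hKmeas.comp measurable_snd)).mul
      (Complex.measurable_exp.comp hg))
  have hHint : Integrable (Function.uncurry H) (P.prod volume) := by
    rw [MeasureTheory.integrable_prod_iff hHmeas.aestronglyMeasurable]
    constructor
    · refine Filter.Eventually.of_forall fun ω => ?_
      refine hKint.mono' ((hHmeas.comp (measurable_prodMk_left : Measurable fun y : Fin d → ℝ => (ω, y))).aestronglyMeasurable)
        (Filter.Eventually.of_forall fun y => ?_)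
      have := hnormH ω y
      exact le_of_eq this
    · have heq : (fun ω => ∫ y : Fin d → ℝ, ‖Function.uncurry H (ω, y)‖)
          = fun ω => ∫ y : Fin d → ℝ, K y := by
        funext ω
        exact integral_congr_ae (Filter.Eventually.of_forall fun y => hnormH ω y)
      rw [heq]
      exact integrable_const _
  have hswap := MeasureTheory.integral_integral_swap (f := H) hHint
  have hInner : ∀ ω, (∫ y : Fin d → ℝ, H ω y) = ((Φ ω : ℝ) : ℂ) := by
    intro ω
    have h1 : ∀ y : Fin d → ℝ, H ω y = ((K y : ℝ) : ℂ)
        * Complex.exp (Complex.I * ∑ j, ((s * X T ω j : ℝ) : ℂ) * ((y j : ℝ) : ℂ)) := by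
      intro y
      rw [hHdef]
      simp only
      have hsum : (∑ j, (((s • y) j : ℝ) : ℂ) * ((X T ω j : ℝ) : ℂ))
          = ∑ j, ((s * X T ω j : ℝ) : ℂ) * ((y j : ℝ) : ℂ) := by
        apply Finset.sum_congr rfl
        intro j _
        rw [Pi.smul_apply, smul_eq_mul]
        push_cast
        ring
      rw [hsum]
    rw [integral_congr_ae (Filter.Eventually.of_forall h1)]
    exact KappaPolyaAux.prodLemma hε (fun j => s * X T ω j)
  have hInnerω : ∀ y : Fin d → ℝ, (∫ ω, H ω y ∂P)
      = ((K y : ℝ) : ℂ) * Complex.exp (-((T : ℝ) : ℂ) * Ψ (s • y)) := by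
    intro y
    rw [hHdef]
    simp only
    rw [MeasureTheory.integral_const_mul]
    rw [hΨ T hT0 (s • y)]
  have step2 : ((∫ ω, Φ ω ∂P : ℝ) : ℂ)
      = ∫ y : Fin d → ℝ, ((K y : ℝ) : ℂ) * Complex.exp (-((T : ℝ) : ℂ) * Ψ (s • y)) := by
    rw [← KappaPolyaAux.myIntegralOfReal]
    rw [integral_congr_ae (Filter.Eventually.of_forall fun ω => (hInner ω).symm)]
    rw [hswap]
    exact integral_congr_ae (Filter.Eventually.of_forall hInnerω)
  calc kappa P X ε T ≤ 2 ^ d * ∫ ω, Φ ω ∂P := step1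
    _ = 2 ^ d * (∫ y : Fin d → ℝ,
        K y • Complex.exp (-((T : ℝ) : ℂ) * Ψ (s • y))).re := by
      congr 1
      have hsm : (∫ y : Fin d → ℝ, K y • Complex.exp (-((T : ℝ) : ℂ) * Ψ (s • y)))
          = ∫ y : Fin d → ℝ, ((K y : ℝ) : ℂ) * Complex.exp (-((T : ℝ) : ℂ) * Ψ (s • y)) := by
        refine integral_congr_ae (Filter.Eventually.of_forall fun y => ?_)
        simp only [Complex.real_smul]
      rw [hsm, ← step2, Complex.ofReal_re]

end
end

section
/- Let X be a Lévy process in R^d with characteristic exponent Ψ, κ_ε(t) := P{X(t) ∈ B(0,ε)}, and f_C the standard Cauchy density on R^d. Then for every ε > 0, every k ≥ 1, and every t ∈ R, κ_ε(|t|) ≥ ∫_{R^d} f_C(z) exp(−|t| Ψ(sgn(t) k z/ε)) dz − e^{−k}. -/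
open MeasureTheory ProbabilityTheory Filter Set Metric Bornology
open scoped ENNReal NNReal Topology symmDiff Real

noncomputable section

lemma integral_cexp_neg_mul_Ioi {a : ℂ} (ha : 0 < a.re) :
    ∫ x : ℝ in Ioi (0:ℝ), Complex.exp (-(a * x)) = a⁻¹ := by
  have hane : a ≠ 0 := fun h => by simp [h] at ha
  have hcont : Continuous fun x : ℝ => Complex.exp (-(a * x)) :=
    Complex.continuous_exp.comp ((continuous_const.mul Complex.continuous_ofReal).neg)
  have hre : ∀ x : ℝ, (-(a * (x:ℂ))).re = -(a.re * x) := by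
    intro x; simp [Complex.mul_re]
  have hint : IntegrableOn (fun x : ℝ => Complex.exp (-(a * x))) (Ioi 0) := by
    refine Integrable.mono' (exp_neg_integrableOn_Ioi 0 ha) hcont.aestronglyMeasurable.restrict ?_
    filter_upwards with x
    rw [Complex.norm_exp, hre, neg_mul]
  have hderiv : ∀ x ∈ Ici (0:ℝ),
      HasDerivAt (fun x : ℝ => -Complex.exp (-(a * x)) / a) (Complex.exp (-(a * x))) x := by
    intro x _
    have h1 : HasDerivAt (fun x : ℝ => (x : ℂ)) 1 x := Complex.ofRealCLM.hasDerivAt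
    have h2 := ((h1.const_mul a).neg.cexp.neg).div_const a
    refine h2.congr_deriv ?_
    simp only [Pi.neg_apply]
    field_simp
  have htend : Tendsto (fun x : ℝ => -Complex.exp (-(a * x)) / a) atTop (nhds 0) := by
    rw [tendsto_zero_iff_norm_tendsto_zero]
    have h0 : Tendsto (fun x : ℝ => Real.exp (-(a.re * x)) / ‖a‖) atTop (nhds 0) := by
      have : Tendsto (fun x : ℝ => Real.exp (-(a.re * x))) atTop (nhds 0) := by
        exact Real.tendsto_exp_neg_atTop_nhds_zero.comp
          (Tendsto.const_mul_atTop ha tendsto_id)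
      simpa using this.div_const ‖a‖
    refine h0.congr fun x => ?_
    simp [Complex.norm_exp, hre]
  have := integral_Ioi_of_hasDerivAt_of_tendsto' hderiv hint htend
  rw [this]
  rw [Complex.ofReal_zero, mul_zero, neg_zero, Complex.exp_zero]
  field_simp
  ring

open FourierTransform Complex in
lemma cauchy_char (a : ℝ) :
    ∫ z : ℝ, ((π⁻¹ * (1 + z ^ 2)⁻¹ : ℝ) : ℂ) * Complex.exp (Complex.I * (a * z))
      = ((Real.exp (-|a|) : ℝ) : ℂ) := by
  classical
  set f : ℝ → ℂ := fun x => ((Real.exp (-|x|) : ℝ) : ℂ) with hfdef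
  have hIoi : IntegrableOn (fun x : ℝ => Real.exp (-|x|)) (Ioi 0) := by
    refine (exp_neg_integrableOn_Ioi 0 one_pos).congr_fun (fun x hx => ?_) measurableSet_Ioi
    rw [abs_of_pos hx]; dsimp only; rw [neg_mul, one_mul]
  have hIic : IntegrableOn (fun x : ℝ => Real.exp (-|x|)) (Iic 0) := by
    refine (integrableOn_exp_Iic 0).congr_fun (fun x hx => ?_) measurableSet_Iic
    rw [abs_of_nonpos hx, neg_neg]
  have h_real : Integrable (fun x : ℝ => Real.exp (-|x|)) := by
    rw [← integrableOn_univ, ← Iic_union_Ioi (a := (0:ℝ))]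
    exact hIic.union hIoi
  have hf_int : Integrable f := h_real.ofReal
  have hf_cont : Continuous f :=
    Complex.continuous_ofReal.comp (Real.continuous_exp.comp continuous_abs.neg)
  -- the Fourier transform of f
  have hF : ∀ w : ℝ, 𝓕 f w = ((2 * (1 + (2*π*w)^2)⁻¹ : ℝ) : ℂ) := by
    intro w
    have hG : ∀ v : ℝ, Complex.exp (↑(-2 * π * v * w) * Complex.I) • f v
        = Complex.exp (↑(-2 * π * v * w) * Complex.I - ↑|v|) := by
      intro v
      show Complex.exp (↑(-2 * π * v * w) * Complex.I) * ((Real.exp (-|v|) : ℝ) : ℂ)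
          = Complex.exp (↑(-2 * π * v * w) * Complex.I - ↑|v|)
      rw [Complex.ofReal_exp, ← Complex.exp_add]
      push_cast
      ring_nf
    have hGm : AEStronglyMeasurable
        (fun v : ℝ => Complex.exp (↑(-2 * π * v * w) * Complex.I - ↑|v|)) volume := by
      apply Continuous.aestronglyMeasurable
      exact Complex.continuous_exp.comp
        (((Complex.continuous_ofReal.comp (by continuity)).mul continuous_const).sub
          (Complex.continuous_ofReal.comp continuous_abs))
    have hGnorm : ∀ v : ℝ, ‖Complex.exp (↑(-2 * π * v * w) * Complex.I - ↑|v|)‖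
        = Real.exp (-|v|) := by
      intro v
      rw [Complex.norm_exp]
      congr 1
      simp [Complex.sub_re, Complex.mul_re]
    have hGIoi : IntegrableOn
        (fun v : ℝ => Complex.exp (↑(-2 * π * v * w) * Complex.I - ↑|v|)) (Ioi 0) := by
      refine Integrable.mono' hIoi hGm.restrict ?_
      filter_upwards with v using le_of_eq (hGnorm v)
    have hGIic : IntegrableOn
        (fun v : ℝ => Complex.exp (↑(-2 * π * v * w) * Complex.I - ↑|v|)) (Iic 0) := by
      refine Integrable.mono' hIic hGm.restrict ?_
      filter_upwards with v using le_of_eq (hGnorm v)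
    rw [Real.fourier_real_eq_integral_exp_smul]
    simp_rw [hG]
    rw [← intervalIntegral.integral_Iic_add_Ioi hGIic hGIoi]
    have hpos : ∫ v in Ioi (0:ℝ), Complex.exp (↑(-2 * π * v * w) * Complex.I - ↑|v|)
        = (1 + ↑(2*π*w) * Complex.I)⁻¹ := by
      rw [← integral_cexp_neg_mul_Ioi (a := 1 + ↑(2*π*w) * Complex.I) (by simp)]
      refine setIntegral_congr_fun measurableSet_Ioi (fun v hv => ?_)
      rw [abs_of_pos hv]
      congr 1
      push_cast
      ring
    have hneg : ∫ v in Iic (0:ℝ), Complex.exp (↑(-2 * π * v * w) * Complex.I - ↑|v|)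
        = (1 - ↑(2*π*w) * Complex.I)⁻¹ := by
      have h0 : ∫ v in Iic (0:ℝ), Complex.exp (↑(-2 * π * v * w) * Complex.I - ↑|v|)
          = ∫ v in Ioi (0:ℝ), Complex.exp (↑(-2 * π * (-v) * w) * Complex.I - ↑|(-v)|) := by
        have := integral_comp_neg_Ioi (0:ℝ)
            (fun v => Complex.exp (↑(-2 * π * v * w) * Complex.I - ↑|v|))
        simp only [neg_zero] at this
        exact this.symm
      rw [h0, ← integral_cexp_neg_mul_Ioi (a := 1 - ↑(2*π*w) * Complex.I) (by simp)]
      refine setIntegral_congr_fun measurableSet_Ioi (fun v hv => ?_)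
      rw [abs_neg, abs_of_pos hv]
      congr 1
      push_cast
      ring
    rw [hpos, hneg]
    have h1 : ((1:ℂ) + ↑(2*π*w) * Complex.I) ≠ 0 := by
      intro h
      have := congrArg Complex.re h
      simp at this
    have h2 : ((1:ℂ) - ↑(2*π*w) * Complex.I) ≠ 0 := by
      intro h
      have := congrArg Complex.re h
      simp at this
    have h3 : ((1:ℂ) - ↑(2*π*w) * Complex.I) * (1 + ↑(2*π*w) * Complex.I)
        = ((1 + (2*π*w)^2 : ℝ) : ℂ) := by
      push_cast
      ring_nf
      rw [Complex.I_sq]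
      ring
    have h4 : ((1 + (2*π*w)^2 : ℝ) : ℂ) ≠ 0 := by
      rw [Complex.ofReal_ne_zero]
      positivity
    have h5 : ((1:ℂ) - ↑(2*π*w) * Complex.I) + (1 + ↑(2*π*w) * Complex.I) = 2 := by ring
    rw [inv_add_inv h2 h1, h5, h3]
    push_cast
    rw [div_eq_mul_inv]
  have hFint : Integrable (𝓕 f) := by
    have h1 : Integrable (fun x : ℝ => (1+x^2)⁻¹) := integrable_inv_one_add_sq
    have h2 : Integrable (fun x : ℝ => (1+(2*π*x)^2)⁻¹) :=
      h1.comp_mul_left' (R := 2*π) (by positivity)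
    exact ((h2.const_mul 2).ofReal).congr
      (Filter.Eventually.of_forall fun w => (hF w).symm)
  have hinv : 𝓕⁻ (𝓕 f) a = f a :=
    hf_int.fourierInv_fourier_eq hFint (hf_cont.continuousAt (x := a))
  have e1 : 𝓕 (𝓕 f) (-a) = ∫ w : ℝ, Complex.exp (↑(2 * π * w * a) * Complex.I)
      * ((2 * (1 + (2*π*w)^2)⁻¹ : ℝ) : ℂ) := by
    rw [Real.fourier_real_eq_integral_exp_smul]
    refine integral_congr_ae (Filter.Eventually.of_forall fun w => ?_)
    show Complex.exp (↑(-2 * π * w * -a) * Complex.I) • 𝓕 f w = _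
    rw [hF w, smul_eq_mul]
    have : (-2 * π * w * -a) = 2 * π * w * a := by ring
    rw [this]
  set g : ℝ → ℂ := fun z => ((π⁻¹ * (1 + z ^ 2)⁻¹ : ℝ) : ℂ)
      * Complex.exp (Complex.I * (a * z)) with hgdef
  have e3 : ∫ x : ℝ, g (2*π*x) = |(2*π : ℝ)⁻¹| • ∫ z, g z :=
    Measure.integral_comp_mul_left g (2*π)
  have e4 : ∀ x : ℝ, Complex.exp (↑(2 * π * x * a) * Complex.I)
      * ((2 * (1 + (2*π*x)^2)⁻¹ : ℝ) : ℂ) = (2*π : ℝ) • g (2*π*x) := by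
    intro x
    show _ = (2*π : ℝ) • (((π⁻¹ * (1 + (2*π*x) ^ 2)⁻¹ : ℝ) : ℂ)
      * Complex.exp (Complex.I * (↑a * ↑(2*π*x))))
    have harg : (↑(2 * π * x * a) * Complex.I) = (Complex.I * (↑a * ↑(2*π*x))) := by
      push_cast; ring
    rw [harg, Complex.real_smul]
    have hco : (2 * (1 + (2*π*x)^2)⁻¹ : ℝ) = (2*π) * (π⁻¹ * (1 + (2*π*x)^2)⁻¹) := by
      field_simp
    rw [hco]
    push_cast
    ring
  calc ∫ z : ℝ, g z = (2*π : ℝ) • ((2*π : ℝ)⁻¹ • ∫ z, g z) := by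
        rw [smul_smul, mul_inv_cancel₀ (by positivity), one_smul]
    _ = (2*π : ℝ) • ∫ x : ℝ, g (2*π*x) := by
        rw [e3, abs_of_pos (show (0:ℝ) < (2*π)⁻¹ by positivity)]
    _ = ∫ x : ℝ, (2*π : ℝ) • g (2*π*x) := (integral_smul _ _).symm
    _ = ∫ x : ℝ, Complex.exp (↑(2 * π * x * a) * Complex.I)
        * ((2 * (1 + (2*π*x)^2)⁻¹ : ℝ) : ℂ) :=
        integral_congr_ae (Filter.Eventually.of_forall fun x => (e4 x).symm)
    _ = 𝓕 (𝓕 f) (-a) := e1.symm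
    _ = 𝓕⁻ (𝓕 f) a := (Real.fourierInv_eq_fourier_neg _ _).symm
    _ = ((Real.exp (-|a|) : ℝ) : ℂ) := hinv

lemma cauchyDensity_eq_prod {d : ℕ} (z : Fin d → ℝ) :
    cauchyDensity z = ∏ j, (π⁻¹ * (1 + (z j) ^ 2)⁻¹) := by
  rw [cauchyDensity, Finset.prod_mul_distrib, Finset.prod_const, Finset.card_univ,
    Fintype.card_fin]

lemma cauchyDensity_nonneg {d : ℕ} (z : Fin d → ℝ) : 0 ≤ cauchyDensity z := by
  rw [cauchyDensity_eq_prod]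
  exact Finset.prod_nonneg fun j _ => by positivity

lemma cauchyDensity_continuous {d : ℕ} : Continuous (cauchyDensity (d := d)) := by
  have : ∀ z : Fin d → ℝ, cauchyDensity z = ∏ j, (π⁻¹ * (1 + (z j) ^ 2)⁻¹) :=
    cauchyDensity_eq_prod
  rw [funext this]
  exact continuous_finset_prod _ fun j _ =>
    continuous_const.mul ((continuous_const.add ((continuous_apply j).pow 2)).inv₀
      (fun z => (by positivity : (0:ℝ) < 1 + z j ^ 2).ne'))

lemma cauchyDensity_integrable {d : ℕ} :
    MeasureTheory.Integrable (cauchyDensity (d := d)) := by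
  have h1 : ∀ j : Fin d, Integrable (fun x : ℝ => π⁻¹ * (1 + x ^ 2)⁻¹) :=
    fun j => integrable_inv_one_add_sq.const_mul π⁻¹
  have h2 := MeasureTheory.Integrable.fintype_prod (f := fun _ : Fin d =>
    (fun x : ℝ => π⁻¹ * (1 + x ^ 2)⁻¹)) (fun i => h1 i)
  exact h2.congr (Filter.Eventually.of_forall fun z => (cauchyDensity_eq_prod z).symm)

lemma cauchy_char_pi {d : ℕ} (a : Fin d → ℝ) :
    ∫ z : Fin d → ℝ, cauchyDensity z • Complex.exp (Complex.I * ∑ j, (a j : ℂ) * (z j : ℂ))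
      = ((Real.exp (-∑ j, |a j|) : ℝ) : ℂ) := by
  have h1 : ∀ z : Fin d → ℝ,
      cauchyDensity z • Complex.exp (Complex.I * ∑ j, (a j : ℂ) * (z j : ℂ))
        = ∏ j, (((π⁻¹ * (1 + (z j) ^ 2)⁻¹ : ℝ) : ℂ)
            * Complex.exp (Complex.I * (a j * z j))) := by
    intro z
    rw [Finset.prod_mul_distrib, Complex.real_smul, cauchyDensity_eq_prod]
    congr 1
    · push_cast
      rfl
    · rw [Finset.mul_sum, Complex.exp_sum]
  simp_rw [h1]
  rw [MeasureTheory.integral_fintype_prod_volume_eq_prod (ι := Fin d)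
    (f := fun j (x : ℝ) => ((π⁻¹ * (1 + x ^ 2)⁻¹ : ℝ) : ℂ)
      * Complex.exp (Complex.I * (a j * x)))]
  have h2 : ∀ j : Fin d, ∫ x : ℝ, ((π⁻¹ * (1 + x ^ 2)⁻¹ : ℝ) : ℂ)
      * Complex.exp (Complex.I * (a j * x)) = ((Real.exp (-|a j|) : ℝ) : ℂ) :=
    fun j => cauchy_char (a j)
  rw [Finset.prod_congr rfl fun j _ => h2 j, ← Complex.ofReal_prod]
  congr 1
  rw [← Real.exp_sum]
  congr 1
  rw [← Finset.sum_neg_distrib]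

/-- Lower bound for `κ_ε`: for all `ε > 0`, `k ≥ 1` and `t ∈ ℝ`,
`κ_ε(|t|) ≥ ∫ f_C(z) exp(-|t| Ψ(sgn(t) k z/ε)) dz - e^{-k}`. -/
theorem kappa_ge_cauchy {Ω : Type*} [MeasurableSpace Ω] {d : ℕ}
    (P : Measure Ω) (X : ℝ → Ω → (Fin d → ℝ)) (hX : IsLevyProcess P X)
    (Ψ : (Fin d → ℝ) → ℂ)
    (hΨ : ∀ t : ℝ, 0 ≤ t → ∀ z : Fin d → ℝ,
      ∫ ω, Complex.exp (Complex.I * ∑ j, (z j : ℂ) * (X t ω j : ℂ)) ∂P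
        = Complex.exp (-(t : ℂ) * Ψ z))
    (ε k : ℝ) (hε : 0 < ε) (hk : 1 ≤ k) (t : ℝ) :
    (∫ z : Fin d → ℝ,
        cauchyDensity z • Complex.exp (-((|t| : ℝ) : ℂ) * Ψ (Real.sign t • ((k / ε) • z)))).re
      - Real.exp (-k)
      ≤ kappa P X ε |t| := by
  classical
  have hP : IsProbabilityMeasure P := hX.isProb
  set c : ℝ := Real.sign t * (k / ε) with hc
  set Y : Ω → Fin d → ℝ := X |t| with hY
  have hYm : Measurable Y := hX.meas |t|
  set g : Ω → ℝ := fun ω => Real.exp (-(∑ j, |c * Y ω j|)) with hg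
  set S : Set Ω := {ω | Y ω ∈ Metric.ball (0 : Fin d → ℝ) ε} with hSdef
  have hS : MeasurableSet S := hYm measurableSet_ball
  set F : (Fin d → ℝ) → Ω → ℂ := fun z ω =>
    cauchyDensity z • Complex.exp (Complex.I * ∑ j, ((c * z j : ℝ) : ℂ) * ((Y ω j : ℝ) : ℂ))
    with hFdef
  have hkey : ∀ z : Fin d → ℝ,
      cauchyDensity z • Complex.exp (-((|t| : ℝ) : ℂ) * Ψ (Real.sign t • ((k / ε) • z)))
        = ∫ ω, F z ω ∂P := by
    intro z
    have hw : ∀ j, (Real.sign t • ((k / ε) • z)) j = c * z j := fun j => by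
      simp [hc, Pi.smul_apply, smul_eq_mul, mul_assoc]
    have h0 := hΨ |t| (abs_nonneg t) (Real.sign t • ((k / ε) • z))
    simp_rw [hw] at h0
    rw [← hY] at h0
    show cauchyDensity z •
        Complex.exp (-((|t| : ℝ) : ℂ) * Ψ (Real.sign t • ((k / ε) • z)))
      = ∫ ω, cauchyDensity z •
          Complex.exp (Complex.I * ∑ j, ((c * z j : ℝ) : ℂ) * ((Y ω j : ℝ) : ℂ)) ∂P
    rw [integral_smul, ← h0]
  have hnorm : ∀ z ω, ‖F z ω‖ = cauchyDensity z := by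
    intro z ω
    show ‖cauchyDensity z •
      Complex.exp (Complex.I * ∑ j, ((c * z j : ℝ) : ℂ) * ((Y ω j : ℝ) : ℂ))‖ = _
    rw [norm_smul]
    have hsum : (∑ j, ((c * z j : ℝ) : ℂ) * ((Y ω j : ℝ) : ℂ))
        = ((∑ j, (c * z j) * (Y ω j) : ℝ) : ℂ) := by push_cast; rfl
    rw [hsum, Real.norm_eq_abs, abs_of_nonneg (cauchyDensity_nonneg z)]
    have h1 : ‖Complex.exp (Complex.I * ((∑ j, (c * z j) * (Y ω j) : ℝ) : ℂ))‖ = 1 := by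
      rw [Complex.norm_exp]
      simp [Complex.mul_re]
    rw [h1, mul_one]
  have hmeas : AEStronglyMeasurable (Function.uncurry F)
      ((volume : Measure (Fin d → ℝ)).prod P) := by
    apply Measurable.aestronglyMeasurable
    show Measurable ((fun p : (Fin d → ℝ) × Ω => cauchyDensity p.1) •
      (fun p : (Fin d → ℝ) × Ω =>
        Complex.exp (Complex.I * ∑ j, ((c * p.1 j : ℝ) : ℂ) * ((Y p.2 j : ℝ) : ℂ))))
    apply Measurable.smul
    · exact cauchyDensity_continuous.measurable.comp measurable_fst
    · apply Measurable.cexp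
      apply Measurable.const_mul
      apply Finset.measurable_sum
      intro j _
      exact (Complex.measurable_ofReal.comp
          (((measurable_pi_apply j).comp measurable_fst :
            Measurable fun p : (Fin d → ℝ) × Ω => p.1 j).const_mul c)).mul
        (Complex.measurable_ofReal.comp
          ((measurable_pi_apply j).comp (hYm.comp measurable_snd)))
  have hFint : Integrable (Function.uncurry F)
      ((volume : Measure (Fin d → ℝ)).prod P) := by
    rw [integrable_prod_iff hmeas]
    constructor
    · filter_upwards [hmeas.prodMk_left] with z hz
      refine Integrable.mono' (integrable_const (cauchyDensity z)) hz ?_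
      exact Filter.Eventually.of_forall fun ω => le_of_eq (hnorm z ω)
    · have he : (fun z => ∫ ω, ‖F z ω‖ ∂P) = fun z => cauchyDensity z := by
        funext z
        rw [show (fun ω => ‖F z ω‖) = fun _ => cauchyDensity z from funext (hnorm z)]
        simp
      simp only [Function.uncurry_apply_pair]
      rw [he]
      exact cauchyDensity_integrable
  have hswap := integral_integral_swap hFint
  have hinner : ∀ ω, (∫ z : Fin d → ℝ, F z ω) = ((g ω : ℝ) : ℂ) := by
    intro ω
    have harg : ∀ z : Fin d → ℝ, F z ω = cauchyDensity z •
        Complex.exp (Complex.I * ∑ j, ((c * Y ω j : ℝ) : ℂ) * ((z j : ℝ) : ℂ)) := by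
      intro z
      show cauchyDensity z • _ = _
      congr 3
      refine Finset.sum_congr rfl fun j _ => ?_
      push_cast
      ring
    simp_rw [harg]
    rw [cauchy_char_pi (fun j => c * Y ω j)]
  have main : (∫ z : Fin d → ℝ,
      cauchyDensity z • Complex.exp (-((|t| : ℝ) : ℂ) * Ψ (Real.sign t • ((k / ε) • z))))
      = ((∫ ω, g ω ∂P : ℝ) : ℂ) := by
    calc (∫ z : Fin d → ℝ,
        cauchyDensity z • Complex.exp (-((|t| : ℝ) : ℂ) * Ψ (Real.sign t • ((k / ε) • z))))
        = ∫ z : Fin d → ℝ, ∫ ω, F z ω ∂P :=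
          integral_congr_ae (Filter.Eventually.of_forall fun z => hkey z)
      _ = ∫ ω, (∫ z : Fin d → ℝ, F z ω) ∂P := hswap
      _ = ∫ ω, ((g ω : ℝ) : ℂ) ∂P :=
          integral_congr_ae (Filter.Eventually.of_forall fun ω => hinner ω)
      _ = ((∫ ω, g ω ∂P : ℝ) : ℂ) := integral_ofReal
  have hg_le_one : ∀ ω, g ω ≤ 1 := fun ω =>
    Real.exp_le_one_iff.mpr (neg_nonpos.mpr (Finset.sum_nonneg fun j _ => abs_nonneg _))
  have hg_meas : Measurable g := by
    apply Real.measurable_exp.comp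
    apply Measurable.neg
    apply Finset.measurable_sum
    intro j _
    exact (((measurable_pi_apply j).comp hYm).const_mul c).abs
  have hg_int : Integrable g P := by
    refine Integrable.mono' (integrable_const 1) hg_meas.aestronglyMeasurable ?_
    refine Filter.Eventually.of_forall fun ω => ?_
    rw [Real.norm_eq_abs, abs_of_nonneg (Real.exp_nonneg _)]
    exact hg_le_one ω
  have hInd : Integrable (S.indicator fun _ => (1:ℝ)) P := (integrable_const 1).indicator hS
  have hbound : ∀ᵐ ω ∂P, g ω ≤ S.indicator (fun _ => (1:ℝ)) ω + Real.exp (-k) := by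
    rcases eq_or_ne t 0 with ht | ht
    · filter_upwards [hX.zero] with ω h0
      have hmem : ω ∈ S := by
        simp only [hSdef, mem_setOf_eq, mem_ball]
        rw [hY, ht, abs_zero, h0]
        simpa using hε
      rw [indicator_of_mem hmem]
      have := Real.exp_nonneg (-k)
      linarith [hg_le_one ω]
    · refine Filter.Eventually.of_forall fun ω => ?_
      by_cases hmem : ω ∈ S
      · rw [indicator_of_mem hmem]
        have := Real.exp_nonneg (-k)
        linarith [hg_le_one ω]
      · rw [indicator_of_notMem hmem]
        have hdist : ε ≤ ‖Y ω‖ := by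
          have hnot : ¬ dist (Y ω) 0 < ε := by
            simpa [hSdef, mem_ball] using hmem
          rw [dist_zero_right] at hnot
          linarith [not_lt.mp hnot]
        have hcabs : |c| = k / ε := by
          rw [hc, abs_mul, abs_of_pos (div_pos (lt_of_lt_of_le one_pos hk) hε)]
          rcases lt_or_gt_of_ne ht with h | h
          · rw [Real.sign_of_neg h]; norm_num
          · rw [Real.sign_of_pos h]; norm_num
        have hsum : (k / ε) * ‖Y ω‖ ≤ ∑ j, |c * Y ω j| := by
          have h1 : ∀ j, |c * Y ω j| = (k/ε) * |Y ω j| := fun j => by rw [abs_mul, hcabs]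
          rw [Finset.sum_congr rfl fun j _ => h1 j, ← Finset.mul_sum]
          refine mul_le_mul_of_nonneg_left ?_
            (le_of_lt (div_pos (lt_of_lt_of_le one_pos hk) hε))
          refine (pi_norm_le_iff_of_nonneg
            (Finset.sum_nonneg fun j _ => abs_nonneg _)).mpr fun j => ?_
          rw [Real.norm_eq_abs]
          exact Finset.single_le_sum (fun i _ => abs_nonneg (Y ω i)) (Finset.mem_univ j)
        have hk2 : k ≤ ∑ j, |c * Y ω j| := by
          have h2 : (k/ε) * ε ≤ (k/ε) * ‖Y ω‖ :=
            mul_le_mul_of_nonneg_left hdist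
              (le_of_lt (div_pos (lt_of_lt_of_le one_pos hk) hε))
          rw [div_mul_cancel₀ _ (ne_of_gt hε)] at h2
          linarith
        have h3 : g ω ≤ Real.exp (-k) := Real.exp_le_exp.mpr (by linarith)
        simpa using h3
  have hfinal : ∫ ω, g ω ∂P ≤ (P S).toReal + Real.exp (-k) := by
    calc ∫ ω, g ω ∂P ≤ ∫ ω, (S.indicator (fun _ => (1:ℝ)) ω + Real.exp (-k)) ∂P :=
          integral_mono_ae hg_int (hInd.add (integrable_const _)) hbound
      _ = (P S).toReal + Real.exp (-k) := by
          rw [integral_add hInd (integrable_const _), integral_indicator_const _ hS,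
            integral_const, probReal_univ]
          simp [measureReal_def]
  have hkap : kappa P X ε |t| = (P S).toReal := rfl
  rw [main, Complex.ofReal_re, hkap]
  linarith

end
end

section
/- Let X be a Lévy process in R^d and κ_ε(t) := P{X(t) ∈ B(0,ε)}. Then for every nonrandom bounded Borel set F ⊆ [0,∞) and every ε > 0, E[ K_{X(F)}(ε) ] ≤ 2^{2d+1} / ( inf_{ν∈P(F)} ∫∫ κ_ε(|s−t|) ν(ds) ν(dt) ), where K_G(ε) denotes the Kolmogorov capacity of G at scale ε in the ℓ^∞ metric. -/
open MeasureTheory ProbabilityTheory Filter Set Metric Bornology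
open scoped ENNReal NNReal Topology symmDiff Real

noncomputable section

/-- Every subset of `ℝ` has a countable subset which approximates every point from the right. -/
lemma exists_right_dense (F : Set ℝ) : ∃ D : Set ℝ, D ⊆ F ∧ D.Countable ∧
    ∀ s ∈ F, ∀ η : ℝ, 0 < η → ∃ t ∈ D, s ≤ t ∧ t < s + η := by
  classical
  let g : ℚ × ℚ → Set ℝ := fun p =>
    if h : (F ∩ Ioo (p.1 : ℝ) (p.2 : ℝ)).Nonempty then {h.some} else ∅
  let R : ℚ → Set ℝ := fun q => {s | s ∈ F ∧ s < (q : ℝ) ∧ F ∩ Ioo s (q : ℝ) = ∅}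
  have hgF : ∀ p, g p ⊆ F := by
    intro p x hx
    simp only [g] at hx
    split_ifs at hx with h
    · rcases hx with rfl
      exact h.some_mem.1
    · exact absurd hx (notMem_empty x)
  refine ⟨(⋃ p, g p) ∪ ⋃ q, R q, ?_, ?_, ?_⟩
  · refine union_subset (iUnion_subset hgF) (iUnion_subset ?_)
    intro q x hx; exact hx.1
  · refine Countable.union (countable_iUnion fun p => ?_) (countable_iUnion fun q => ?_)
    · simp only [g]; split_ifs
      · exact countable_singleton _
      · exact countable_empty
    · refine Set.Subsingleton.countable ?_
      intro a ha b hb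
      by_contra hab
      rcases lt_or_gt_of_ne hab with h | h
      · have : b ∈ F ∩ Ioo a (q : ℝ) := ⟨hb.1, h, hb.2.1⟩
        rw [ha.2.2] at this; exact this
      · have : a ∈ F ∩ Ioo b (q : ℝ) := ⟨ha.1, h, ha.2.1⟩
        rw [hb.2.2] at this; exact this
  · intro s hs η hη
    by_cases hq : ∃ q : ℚ, s < (q : ℝ) ∧ F ∩ Ioo s (q : ℝ) = ∅
    · obtain ⟨q, h1, h2⟩ := hq
      exact ⟨s, Or.inr (mem_iUnion.2 ⟨q, hs, h1, h2⟩), le_refl s, by linarith⟩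
    · push_neg at hq
      obtain ⟨q, hq1, hq2⟩ := exists_rat_btwn (by linarith : s < s + η)
      obtain ⟨u, huF, hu1, hu2⟩ := hq q hq1
      obtain ⟨a, ha1, ha2⟩ := exists_rat_btwn hu1
      obtain ⟨b, hb1, hb2⟩ := exists_rat_btwn hu2
      have hne : (F ∩ Ioo (a : ℝ) (b : ℝ)).Nonempty := ⟨u, huF, ha2, hb1⟩
      refine ⟨hne.some, Or.inl (mem_iUnion.2 ⟨(a, b), ?_⟩), ?_, ?_⟩
      · simp only [g, dif_pos hne]; rfl
      · have := hne.some_mem.2.1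
        linarith
      · have := hne.some_mem.2.2
        linarith

/-- counting lemma: the number of lattice points `z` with `h • z` within sup-distance `c`
of a fixed point is at most `4 ^ d`, provided `2c < 4h`. -/
lemma grid_count {d : ℕ} {h c : ℝ} (hh : 0 < h) (hc : 0 < c) (hch : 2 * c / h < 4)
    (S : Finset (Fin d → ℤ)) (w : Fin d → ℝ) :
    (S.filter fun z => dist w (fun j => h * (z j : ℝ)) < c).card ≤ 4 ^ d := by
  classical
  set lo : Fin d → ℤ := fun j => ⌈(w j - c) / h⌉
  set hi : Fin d → ℤ := fun j => ⌊(w j + c) / h⌋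
  have hsub : (S.filter fun z => dist w (fun j => h * (z j : ℝ)) < c) ⊆ Finset.Icc lo hi := by
    intro z hz
    rw [Finset.mem_filter] at hz
    have hz2 := hz.2
    rw [dist_pi_lt_iff hc] at hz2
    rw [Finset.mem_Icc]
    constructor
    · intro j
      have := hz2 j
      rw [Real.dist_eq, abs_lt] at this
      have h1 : (w j - c) / h < z j := by
        rw [div_lt_iff₀ hh]
        nlinarith [this.1, this.2]
      exact Int.ceil_le.2 h1.le
    · intro j
      have := hz2 j
      rw [Real.dist_eq, abs_lt] at this
      have h1 : (z j : ℝ) ≤ (w j + c) / h := by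
        rw [le_div_iff₀ hh]
        nlinarith [this.1, this.2]
      exact Int.le_floor.2 h1
  calc (S.filter fun z => dist w (fun j => h * (z j : ℝ)) < c).card
      ≤ (Finset.Icc lo hi).card := Finset.card_le_card hsub
    _ = ∏ j, (Finset.Icc (lo j) (hi j)).card := Pi.card_Icc lo hi
    _ ≤ ∏ _j : Fin d, 4 := by
        refine Finset.prod_le_prod (fun j _ => Nat.zero_le _) (fun j _ => ?_)
        rw [Int.card_Icc]
        have h1 : hi j - lo j < 4 := by
          have hlo : (w j - c) / h ≤ (lo j : ℝ) := Int.le_ceil _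
          have hhi : (hi j : ℝ) ≤ (w j + c) / h := Int.floor_le _
          have : (hi j : ℝ) - lo j < 4 := by
            have h2 : (w j + c) / h - (w j - c) / h = 2 * c / h := by ring
            nlinarith [hch]
          exact_mod_cast this
        omega
    _ = 4 ^ d := by simp [Finset.prod_const]

/-- Integral against a finite nonnegative combination of Dirac measures. -/
lemma integral_finset_smul_dirac {γ : Type*} (I : Finset γ) (c : γ → ℝ≥0∞)
    (hc : ∀ a ∈ I, c a ≠ ∞) (τ : γ → ℝ) (f : ℝ → ℝ) :
    ∫ x, f x ∂(∑ a ∈ I, c a • Measure.dirac (τ a)) = ∑ a ∈ I, (c a).toReal * f (τ a) := by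
  have hintd : ∀ a : γ, Integrable f (Measure.dirac (τ a)) := by
    intro a
    have hae : f =ᵐ[Measure.dirac (τ a)] fun _ => f (τ a) := by
      rw [ae_dirac_eq]
      exact Filter.eventually_pure.2 rfl
    exact (integrable_const (f (τ a))).congr hae.symm
  rw [integral_finset_sum_measure (fun a ha => (hintd a).smul_measure (hc a ha))]
  refine Finset.sum_congr rfl fun a ha => ?_
  rw [integral_smul_measure, integral_dirac, smul_eq_mul]


/-- First-entrance decomposition identity for a Lévy process. -/
lemma levy_entrance_ident {Ω : Type*} [MeasurableSpace Ω] {d : ℕ}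
    (P : Measure Ω) (X : ℝ → Ω → (Fin d → ℝ)) (hX : IsLevyProcess P X)
    {m : ℕ} (t : Fin m → ℝ) (ht0 : ∀ k, 0 ≤ t k) (htmono : Monotone t)
    (B C : Set (Fin d → ℝ)) (hB : MeasurableSet B) (hC : MeasurableSet C)
    (k : Fin m) (s : ℝ) (hks : t k ≤ s) :
    P ({ω | X (t k) ω ∈ B ∧ ∀ j, j < k → X (t j) ω ∉ B} ∩
        {ω | X s ω - X (t k) ω ∈ C}) =
    P {ω | X (t k) ω ∈ B ∧ ∀ j, j < k → X (t j) ω ∉ B} *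
      P {ω | X (s - t k) ω ∈ C} := by
  classical
  set K := k.1 with hKdef
  have hKm : K < m := k.isLt
  set u : ℕ → ℝ := fun i =>
    if h0 : i = 0 then 0 else if h1 : i ≤ K + 1 then t ⟨i - 1, by omega⟩ else s with hu
  have hu0 : u 0 = 0 := by simp [hu]
  have huk : ∀ i, 1 ≤ i → ∀ h2 : i ≤ K + 1, u i = t ⟨i - 1, by omega⟩ := by
    intro i h h2
    simp only [hu]
    rw [dif_neg (by omega), dif_pos h2]
  have hus : ∀ i, K + 1 < i → u i = s := by
    intro i hi
    simp only [hu]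
    rw [dif_neg (by omega), dif_neg (by omega)]
  have huK1 : u (K + 1) = t k := by
    rw [huk (K + 1) (by omega) (by omega)]
    exact congrArg t (Fin.ext (by simp [hKdef]))
  have huK2 : u (K + 2) = s := hus _ (by omega)
  have hnn : ∀ i, 0 ≤ u i := by
    intro i
    simp only [hu]
    split_ifs with h0 h1
    · exact le_refl 0
    · exact ht0 _
    · exact le_trans (ht0 k) hks
  have hmon : Monotone u := by
    apply monotone_nat_of_le_succ
    intro i
    rcases Nat.eq_zero_or_pos i with rfl | hi
    · rw [hu0, huk 1 le_rfl (by omega)]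
      exact ht0 _
    · by_cases h1 : i + 1 ≤ K + 1
      · rw [huk i hi (by omega), huk (i+1) (by omega) h1]
        exact htmono (by rw [Fin.mk_le_mk]; omega)
      · by_cases h2 : i ≤ K + 1
        · have : i = K + 1 := by omega
          subst this
          rw [huK1, hus _ (by omega)]
          exact hks
        · rw [hus _ (by omega), hus _ (by omega)]
  have hInd := hX.indep (K + 2) u hnn hmon
  set Y : Fin (K + 2) → Ω → (Fin d → ℝ) :=
    fun i ω => X (u (i.1 + 1)) ω - X (u i.1) ω with hYdef
  have hYmeas : ∀ i, Measurable (Y i) := fun i => (hX.meas _).sub (hX.meas _)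
  set lst : Fin (K + 2) := ⟨K + 1, by omega⟩ with hlst
  set S' : Finset (Fin (K + 2)) := Finset.univ.erase lst with hS'
  have hmemS' : ∀ (i : ℕ) (_ : i < K + 1), (⟨i, by omega⟩ : Fin (K + 2)) ∈ S' := by
    intro i hi
    refine Finset.mem_erase.2 ⟨Fin.ne_of_val_ne ?_, Finset.mem_univ _⟩
    show i ≠ K + 1
    omega
  have hIF := hInd.indepFun_finset S' {lst}
    (Finset.disjoint_singleton_right.mpr (Finset.notMem_erase _ _)) hYmeas
  set pS : (↥S' → (Fin d → ℝ)) → ℕ → (Fin d → ℝ) := fun g j =>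
    ∑ i ∈ Finset.range (j + 1),
      (if h : i < K + 1 then g ⟨⟨i, by omega⟩, hmemS' i h⟩ else 0) with hpS
  have hpSmeas : ∀ j, Measurable fun g : ↥S' → (Fin d → ℝ) => pS g j := by
    intro j
    apply Finset.measurable_sum
    intro i _
    by_cases h : i < K + 1
    · simp only [dif_pos h]
      exact measurable_pi_apply _
    · simp only [dif_neg h]
      exact measurable_const
  set M : Set (↥S' → (Fin d → ℝ)) :=
    {g | pS g K ∈ B ∧ ∀ j : ℕ, j < K → pS g j ∉ B} with hM
  have hMmeas : MeasurableSet M := by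
    have : M = ((fun g => pS g K) ⁻¹' B) ∩
        ⋂ (j : ℕ) (_ : j < K), ((fun g => pS g j) ⁻¹' Bᶜ) := by
      ext g
      simp [hM, mem_iInter]
    rw [this]
    exact ((hpSmeas K) hB).inter
      (MeasurableSet.iInter fun j => MeasurableSet.iInter fun _ => (hpSmeas j) hB.compl)
  set N : Set (↥({lst} : Finset (Fin (K + 2))) → (Fin d → ℝ)) :=
    (fun g => g ⟨lst, Finset.mem_singleton_self _⟩) ⁻¹' C with hN
  have hNmeas : MeasurableSet N := (measurable_pi_apply _) hC
  have key := hIF.measure_inter_preimage_eq_mul M N hMmeas hNmeas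
  set Ev : Set Ω := {ω | X (t k) ω ∈ B ∧ ∀ j, j < k → X (t j) ω ∉ B} with hEv
  set Bs : Set Ω := {ω | X s ω - X (t k) ω ∈ C} with hBs
  have hB1 : ((fun a (i : ↥({lst} : Finset (Fin (K + 2)))) => Y i a) ⁻¹' N) = Bs := by
    ext ω
    simp only [hN, hBs, mem_preimage, mem_setOf_eq]
    have : Y lst ω = X s ω - X (t k) ω := by
      show X (u (K + 1 + 1)) ω - X (u (K + 1)) ω = _
      rw [show K + 1 + 1 = K + 2 from rfl, huK2, huK1]
    rw [this]
  have htel : ∀ (ω : Ω) (j : ℕ), j ≤ K →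
      pS (fun i : ↥S' => Y i ω) j = X (u (j + 1)) ω - X 0 ω := by
    intro ω j hj
    have h1 : pS (fun i : ↥S' => Y i ω) j
        = ∑ i ∈ Finset.range (j + 1), (X (u (i + 1)) ω - X (u i) ω) := by
      refine Finset.sum_congr rfl fun i hi => ?_
      rw [Finset.mem_range] at hi
      have hiK : i < K + 1 := by omega
      rw [dif_pos hiK]
    rw [h1, Finset.sum_range_sub (fun i => X (u i) ω), hu0]
  have hE1ae : ∀ᵐ ω ∂P, (ω ∈ ((fun a (i : ↥S') => Y i a) ⁻¹' M) ↔ ω ∈ Ev) := by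
    filter_upwards [hX.zero] with ω hω0
    have hpos : ∀ (j : ℕ) (hjK : j ≤ K),
        pS (fun i : ↥S' => Y i ω) j = X (t ⟨j, by omega⟩) ω := by
      intro j hj
      rw [htel ω j hj, huk (j + 1) (by omega) (by omega), hω0, sub_zero]
      rfl
    simp only [mem_preimage, hM, mem_setOf_eq, hEv]
    constructor
    · rintro ⟨hm1, hm2⟩
      constructor
      · rw [hpos K le_rfl] at hm1
        have : (⟨K, by omega⟩ : Fin m) = k := Fin.ext rfl
        rwa [this] at hm1
      · intro j hjk
        have hj1 : (j : ℕ) < K := hjk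
        have := hm2 j.1 hj1
        rw [hpos j.1 (by omega)] at this
        have he : (⟨j.1, by omega⟩ : Fin m) = j := Fin.ext rfl
        rwa [he] at this
    · rintro ⟨hm1, hm2⟩
      constructor
      · rw [hpos K le_rfl]
        have : (⟨K, by omega⟩ : Fin m) = k := Fin.ext rfl
        rwa [this]
      · intro j hjK
        rw [hpos j (by omega)]
        exact hm2 ⟨j, by omega⟩ hjK
  have hEvBs : (Ev ∩ Bs : Set Ω) =ᵐ[P] (((fun a (i : ↥S') => Y i a) ⁻¹' M) ∩ Bs : Set Ω) := by
    apply Filter.eventuallyEq_set.2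
    filter_upwards [hE1ae] with ω hω
    simp only [mem_inter_iff]
    rw [hω]
  have hEvE1 : (Ev : Set Ω) =ᵐ[P] ((fun a (i : ↥S') => Y i a) ⁻¹' M) := by
    apply Filter.eventuallyEq_set.2
    filter_upwards [hE1ae] with ω hω
    rw [hω]
  have hstat : P Bs = P {ω | X (s - t k) ω ∈ C} := by
    have hmap := hX.stationary (t k) s (ht0 k) hks
    have h1 : P Bs = Measure.map (fun ω => X s ω - X (t k) ω) P C := by
      rw [Measure.map_apply (f := fun ω => X s ω - X (t k) ω) ((hX.meas s).sub (hX.meas (t k))) hC]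
      rfl
    rw [h1, hmap, Measure.map_apply (hX.meas _) hC]
    rfl
  calc P (Ev ∩ Bs) = P (((fun a (i : ↥S') => Y i a) ⁻¹' M) ∩ Bs) := measure_congr hEvBs
    _ = P (((fun a (i : ↥S') => Y i a) ⁻¹' M) ∩
          ((fun a (i : ↥({lst} : Finset (Fin (K + 2)))) => Y i a) ⁻¹' N)) := by rw [hB1]
    _ = P ((fun a (i : ↥S') => Y i a) ⁻¹' M) *
          P ((fun a (i : ↥({lst} : Finset (Fin (K + 2)))) => Y i a) ⁻¹' N) := key
    _ = P Ev * P Bs := by rw [hB1, ← measure_congr hEvE1]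
    _ = P Ev * P {ω | X (s - t k) ω ∈ C} := by rw [hstat]


/-- Pathwise counting bound. -/
lemma pathwise_count {d : ℕ} {ε : ℝ} (hε : 0 < ε) (F D : Set ℝ) (f : ℝ → Fin d → ℝ)
    (hcl : ∀ s ∈ F, f s ∈ closure (f '' D)) :
    kolmCap (f '' F) ε ≤ ∑' z : Fin d → ℤ,
      Set.indicator {z : Fin d → ℤ |
          ∃ t ∈ D, f t ∈ Metric.ball (fun j => (ε * (9/10)) * (z j : ℝ)) (ε * (23/50))}
        (fun _ => (1 : ℝ≥0∞)) z := by
  classical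
  refine iSup_le fun s => iSup_le fun hs => ?_
  obtain ⟨hsub, hpairw⟩ := hs
  set h : ℝ := ε * (9/10) with hh
  have hhpos : 0 < h := by positivity
  have hchoose : ∀ y ∈ s, ∃ z ∈ f '' D, dist y z < ε / 50 := by
    intro y hy
    obtain ⟨u, huF, rfl⟩ := hsub hy
    exact Metric.mem_closure_iff.1 (hcl u huF) _ (by positivity)
  choose! v hv hvd using hchoose
  set r : (Fin d → ℝ) → (Fin d → ℤ) := fun y j => round (v y j / h) with hr
  have hrnd : ∀ y ∈ s, dist (v y) (fun j => h * (r y j : ℝ)) ≤ ε * (9/20) := by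
    intro y hy
    rw [dist_pi_le_iff (by positivity)]
    intro j
    have h1 : v y j - h * (r y j : ℝ) = h * (v y j / h - round (v y j / h)) := by
      simp only [hr]
      rw [mul_sub, mul_div_cancel₀ (v y j) hhpos.ne']
    rw [Real.dist_eq, h1, abs_mul, abs_of_pos hhpos]
    have := abs_sub_round (v y j / h)
    calc h * |v y j / h - ↑(round (v y j / h))| ≤ h * (1/2) := by
          exact mul_le_mul_of_nonneg_left this hhpos.le
      _ = ε * (9/20) := by rw [hh]; ring
  have hmem : ∀ y ∈ s, ∃ t ∈ D, f t ∈ Metric.ball (fun j => h * (r y j : ℝ)) (ε * (23/50)) := by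
    intro y hy
    obtain ⟨t, htD, htv⟩ := hv y hy
    refine ⟨t, htD, ?_⟩
    rw [Metric.mem_ball, htv]
    calc dist (v y) (fun j => h * (r y j : ℝ)) ≤ ε * (9/20) := hrnd y hy
      _ < ε * (23/50) := by nlinarith
  have hinj : Set.InjOn r ↑s := by
    intro y hy y' hy' hryy
    by_contra hne
    have hsep : ε ≤ dist y y' := hpairw hy hy' hne
    have h1 : dist y y' ≤ dist y (v y) + dist (v y) (v y') + dist (v y') y' :=
      dist_triangle4 y (v y) (v y') y'
    have t1 : dist (v y) (v y') ≤
        dist (v y) (fun j => h * (r y j : ℝ)) + dist (fun j => h * (r y j : ℝ)) (v y') :=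
      dist_triangle _ _ _
    have t2 : dist (fun j => h * (r y j : ℝ)) (v y') = dist (v y') (fun j => h * (r y' j : ℝ)) := by
      rw [hryy, dist_comm]
    rw [t2] at t1
    have h3 := hvd y hy
    have h4 := hvd y' hy'
    have h5 := hrnd y hy
    have h6 := hrnd y' hy'
    rw [dist_comm (v y') y'] at h1
    linarith
  calc ((s.card : ℝ≥0∞))
      = ∑ _z ∈ s.image r, (1 : ℝ≥0∞) := by
        rw [Finset.sum_const, nsmul_eq_mul, mul_one, Finset.card_image_of_injOn hinj]
    _ = ∑ z ∈ s.image r, Set.indicator {z : Fin d → ℤ |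
          ∃ t ∈ D, f t ∈ Metric.ball (fun j => (ε * (9/10)) * (z j : ℝ)) (ε * (23/50))}
        (fun _ => (1 : ℝ≥0∞)) z := by
        refine Finset.sum_congr rfl fun z hz => ?_
        obtain ⟨y, hy, rfl⟩ := Finset.mem_image.1 hz
        rw [Set.indicator_of_mem]
        simpa using hmem y hy
    _ ≤ _ := ENNReal.sum_le_tsum _


def gridPt (d : ℕ) (ε : ℝ) (z : Fin d → ℤ) : Fin d → ℝ := fun j => (ε * (9/10)) * (z j : ℝ)

def entrEv {Ω : Type*} [MeasurableSpace Ω] {d : ℕ} (X : ℝ → Ω → (Fin d → ℝ)) (ε : ℝ)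
    {m : ℕ} (t : Fin m → ℝ) (z : Fin d → ℤ) (k : Fin m) : Set Ω :=
  {ω | X (t k) ω ∈ Metric.ball (gridPt d ε z) (ε * (23/50)) ∧
    ∀ j, j < k → X (t j) ω ∉ Metric.ball (gridPt d ε z) (ε * (23/50))}

lemma entrEv_meas {Ω : Type*} [MeasurableSpace Ω] {d : ℕ} {X : ℝ → Ω → (Fin d → ℝ)}
    (hX : ∀ t, Measurable (X t)) (ε : ℝ) {m : ℕ} (t : Fin m → ℝ) (z : Fin d → ℤ) (k : Fin m) :
    MeasurableSet (entrEv X ε t z k) := by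
  have : entrEv X ε t z k = ((X (t k)) ⁻¹' (Metric.ball (gridPt d ε z) (ε * (23/50)))) ∩
      ⋂ (j : Fin m) (_ : j < k), ((X (t j)) ⁻¹' (Metric.ball (gridPt d ε z) (ε * (23/50))))ᶜ := by
    ext ω
    simp [entrEv, mem_iInter]
  rw [this]
  exact ((hX _) measurableSet_ball).inter
    (MeasurableSet.iInter fun j => MeasurableSet.iInter fun _ =>
      ((hX _) measurableSet_ball).compl)

lemma entrEv_disj {Ω : Type*} [MeasurableSpace Ω] {d : ℕ} (X : ℝ → Ω → (Fin d → ℝ)) (ε : ℝ)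
    {m : ℕ} (t : Fin m → ℝ) (z : Fin d → ℤ) {k k' : Fin m} (hkk : k ≠ k') :
    Disjoint (entrEv X ε t z k) (entrEv X ε t z k') := by
  rcases lt_or_gt_of_ne hkk with h | h
  · exact Set.disjoint_left.2 fun ω h1 h2 => (h2.2 k h) h1.1
  · exact Set.disjoint_left.2 fun ω h1 h2 => (h1.2 k' h) h2.1

/-- Core estimate. -/
lemma core_bound {Ω : Type*} [MeasurableSpace Ω] {d : ℕ}
    (P : Measure Ω) (X : ℝ → Ω → (Fin d → ℝ)) (hX : IsLevyProcess P X)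
    {ε : ℝ} (hε : 0 < ε)
    {m : ℕ} (t : Fin m → ℝ) (ht0 : ∀ k, 0 ≤ t k) (htmono : Monotone t)
    (S : Finset (Fin d → ℤ)) (s : ℝ) :
    ∑ z ∈ S, ∑ k ∈ Finset.univ.filter (fun k : Fin m => t k ≤ s),
        P (entrEv X ε t z k) * P {ω | X (s - t k) ω ∈ Metric.ball 0 ε}
      ≤ 2 ^ (2 * d) := by
  classical
  haveI hprob := hX.isProb
  set ρ : ℝ := ε * (23/50) with hρ
  set c : ℝ := ε * (73/50) with hc
  set Cz : (Fin d → ℤ) → Set Ω := fun z => (X s) ⁻¹' (Metric.ball (gridPt d ε z) c) with hCz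
  have hCzmeas : ∀ z, MeasurableSet (Cz z) := fun z => (hX.meas s) measurableSet_ball
  have step1 : ∀ z ∈ S, ∑ k ∈ Finset.univ.filter (fun k : Fin m => t k ≤ s),
      P (entrEv X ε t z k) * P {ω | X (s - t k) ω ∈ Metric.ball 0 ε} ≤ P (Cz z) := by
    intro z _
    have hident : ∀ k ∈ Finset.univ.filter (fun k : Fin m => t k ≤ s),
        P (entrEv X ε t z k) * P {ω | X (s - t k) ω ∈ Metric.ball 0 ε}
          = P (entrEv X ε t z k ∩ {ω | X s ω - X (t k) ω ∈ Metric.ball 0 ε}) := by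
      intro k hk
      rw [Finset.mem_filter] at hk
      exact (levy_entrance_ident P X hX t ht0 htmono _ _ measurableSet_ball
        measurableSet_ball k s hk.2).symm
    rw [Finset.sum_congr rfl hident]
    have hsub : ∀ k : Fin m, (entrEv X ε t z k ∩ {ω | X s ω - X (t k) ω ∈ Metric.ball 0 ε})
        ⊆ entrEv X ε t z k ∩ Cz z := by
      intro k ω hω
      refine ⟨hω.1, ?_⟩
      have h1 : dist (X (t k) ω) (gridPt d ε z) < ρ := hω.1.1
      have h2 : dist (X s ω) (X (t k) ω) < ε := by
        have := hω.2
        rw [mem_setOf_eq, mem_ball_zero_iff] at this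
        rw [dist_eq_norm]
        exact this
      have : dist (X s ω) (gridPt d ε z) < c := by
        calc dist (X s ω) (gridPt d ε z) ≤ dist (X s ω) (X (t k) ω) + dist (X (t k) ω) (gridPt d ε z) :=
              dist_triangle _ _ _
          _ < ε + ρ := add_lt_add h2 h1
          _ = c := by rw [hρ, hc]; ring
      exact this
    calc ∑ k ∈ Finset.univ.filter (fun k : Fin m => t k ≤ s),
          P (entrEv X ε t z k ∩ {ω | X s ω - X (t k) ω ∈ Metric.ball 0 ε})
        ≤ ∑ k ∈ Finset.univ.filter (fun k : Fin m => t k ≤ s),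
          P (entrEv X ε t z k ∩ Cz z) :=
          Finset.sum_le_sum fun k _ => measure_mono (hsub k)
      _ = P (⋃ k ∈ Finset.univ.filter (fun k : Fin m => t k ≤ s), (entrEv X ε t z k ∩ Cz z)) := by
          refine (measure_biUnion_finset ?_ fun k _ => (entrEv_meas hX.meas ε t z k).inter (hCzmeas z)).symm
          intro k _ k' _ hkk
          exact ((entrEv_disj X ε t z hkk).inter_right _).inter_left _
      _ ≤ P (Cz z) := by
          refine measure_mono ?_
          refine iUnion₂_subset fun k _ => inter_subset_right
  calc ∑ z ∈ S, ∑ k ∈ Finset.univ.filter (fun k : Fin m => t k ≤ s),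
        P (entrEv X ε t z k) * P {ω | X (s - t k) ω ∈ Metric.ball 0 ε}
      ≤ ∑ z ∈ S, P (Cz z) := Finset.sum_le_sum step1
    _ = ∑ z ∈ S, ∫⁻ ω, (Cz z).indicator (fun _ => (1:ℝ≥0∞)) ω ∂P := by
        refine Finset.sum_congr rfl fun z _ => ?_
        exact (lintegral_indicator_one (hCzmeas z)).symm
    _ = ∫⁻ ω, ∑ z ∈ S, (Cz z).indicator (fun _ => (1:ℝ≥0∞)) ω ∂P := by
        rw [lintegral_finset_sum]
        intro z _
        exact measurable_const.indicator (hCzmeas z)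
    _ ≤ ∫⁻ _ω, (2 : ℝ≥0∞) ^ (2 * d) ∂P := by
        refine lintegral_mono fun ω => ?_
        have hcount : ∑ z ∈ S, (Cz z).indicator (fun _ => (1:ℝ≥0∞)) ω
            = ((S.filter fun z => dist (X s ω) (fun j => (ε * (9/10)) * (z j : ℝ)) < c).card : ℝ≥0∞) := by
          rw [Finset.card_filter, Nat.cast_sum]
          refine Finset.sum_congr rfl fun z _ => ?_
          rw [Set.indicator_apply]
          by_cases hzc : ω ∈ Cz z
          · rw [if_pos hzc, if_pos, Nat.cast_one]
            exact Metric.mem_ball.1 hzc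
          · rw [if_neg hzc, if_neg, Nat.cast_zero]
            exact fun hcon => hzc (Metric.mem_ball.2 hcon)
        rw [hcount]
        have h4 := grid_count (d := d) (by positivity : (0:ℝ) < ε * (9/10)) (by positivity : (0:ℝ) < c)
          (by rw [div_lt_iff₀ (by positivity)]; rw [hc]; nlinarith) S (X s ω)
        calc ((S.filter fun z => dist (X s ω) (fun j => (ε * (9/10)) * (z j : ℝ)) < c).card : ℝ≥0∞)
            ≤ ((4 ^ d : ℕ) : ℝ≥0∞) := Nat.cast_le.2 h4
          _ = (2 : ℝ≥0∞) ^ (2 * d) := by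
              rw [Nat.cast_pow, pow_mul]
              norm_num
    _ = 2 ^ (2 * d) := by
        rw [lintegral_const, measure_univ, mul_one]

/-- For every bounded Borel `F ⊆ [0,∞)` and `ε > 0`,
`inf_{ν ∈ P(F)} ∫∫ κ_ε(|s-t|) ν(ds)ν(dt) · E[K_{X(F)}(ε)] ≤ 2^{2d+1}`, where `K_G(ε)` is the
Kolmogorov capacity of `G` at scale `ε` in the sup-norm metric. -/
theorem expected_kolmCap_bound {Ω : Type*} [MeasurableSpace Ω] {d : ℕ}
    (P : Measure Ω) (X : ℝ → Ω → (Fin d → ℝ)) (hX : IsLevyProcess P X)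
    (F : Set ℝ) (hFmeas : MeasurableSet F) (hFbdd : Bornology.IsBounded F)
    (hF : F ⊆ Set.Ici 0) (ε : ℝ) (hε : 0 < ε) :
    ENNReal.ofReal (⨅ ν : ProbOn F, ∫ t, ∫ s, kappa P X ε |s - t| ∂ν.1 ∂ν.1)
        * ∫⁻ ω, kolmCap ((fun t => X t ω) '' F) ε ∂P
      ≤ 2 ^ (2 * d + 1) := by
  classical
  haveI hprob := hX.isProb
  set β : ℝ := ⨅ ν : ProbOn F, ∫ t, ∫ s, kappa P X ε |s - t| ∂ν.1 ∂ν.1 with hβdef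
  rcases le_or_gt β 0 with hβ0 | hβpos
  · rw [ENNReal.ofReal_eq_zero.2 hβ0, zero_mul]
    exact zero_le
  have hFne : F.Nonempty := by
    rcases F.eq_empty_or_nonempty with hFe | h
    · exfalso
      subst hFe
      haveI : IsEmpty ↥(ProbOn (∅ : Set ℝ)) := by
        refine ⟨fun ν => ?_⟩
        obtain ⟨hp, h1⟩ := ν.2
        rw [measure_empty] at h1
        exact zero_ne_one h1
      have hβz : β = 0 := by rw [hβdef, iInf_of_isEmpty, Real.sInf_empty]
      rw [hβz] at hβpos
      exact lt_irrefl 0 hβpos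
    · exact h
  obtain ⟨D, hDF, hDcount, hDdense⟩ := exists_right_dense F
  have hDne : D.Nonempty := by
    obtain ⟨s0, hs0⟩ := hFne
    obtain ⟨t0, ht0, _⟩ := hDdense s0 hs0 1 one_pos
    exact ⟨t0, ht0⟩
  obtain ⟨eD, heD⟩ := hDcount.exists_eq_range hDne
  set ρ : ℝ := ε * (23/50) with hρdef
  set A : (Fin d → ℤ) → Set Ω :=
    fun z => ⋃ u ∈ D, (X u) ⁻¹' (Metric.ball (gridPt d ε z) ρ) with hA
  have hAmeas : ∀ z, MeasurableSet (A z) :=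
    fun z => MeasurableSet.biUnion hDcount fun u _ => (hX.meas u) measurableSet_ball
  -- a.s. closure property
  have hclos : ∀ᵐ ω ∂P, ∀ s ∈ F, X s ω ∈ closure ((fun u => X u ω) '' D) := by
    filter_upwards [hX.cadlag] with ω hω
    intro s hsF
    have hs0 : 0 ≤ s := hF hsF
    have hcont : ContinuousWithinAt (fun u => X u ω) (Ici s) s := (hω s hs0).1
    have hseq : ∀ nn : ℕ, ∃ u ∈ D, s ≤ u ∧ u < s + 1/(nn+1) :=
      fun nn => hDdense s hsF _ (by positivity)
    choose tn htnD htn1 htn2 using hseq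
    have h1 : Tendsto tn atTop (𝓝 s) := by
      refine tendsto_of_tendsto_of_tendsto_of_le_of_le (g := fun _ : ℕ => s)
        (h := fun nn : ℕ => s + 1/(nn+1)) tendsto_const_nhds ?_ htn1 (fun nn => (htn2 nn).le)
      have h0 := tendsto_one_div_add_atTop_nhds_zero_nat (𝕜 := ℝ)
      have := tendsto_const_nhds (x := s) (f := atTop (α := ℕ)) |>.add h0
      simpa using this
    have h2 : Tendsto tn atTop (𝓝[Ici s] s) :=
      tendsto_nhdsWithin_iff.2 ⟨h1, Filter.Eventually.of_forall htn1⟩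
    have h3 := hcont.tendsto.comp h2
    exact mem_closure_of_tendsto h3
      (Filter.Eventually.of_forall fun nn => ⟨tn nn, htnD nn, rfl⟩)
  -- lintegral bound
  have hlint : ∫⁻ ω, kolmCap ((fun u => X u ω) '' F) ε ∂P ≤ ∑' z : Fin d → ℤ, P (A z) := by
    have hae : ∀ᵐ ω ∂P, kolmCap ((fun u => X u ω) '' F) ε
        ≤ ∑' z : Fin d → ℤ, (A z).indicator (fun _ => (1:ℝ≥0∞)) ω := by
      filter_upwards [hclos] with ω hω
      refine (pathwise_count hε F D (fun u => X u ω) hω).trans (le_of_eq ?_)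
      refine tsum_congr fun z => ?_
      simp only [Set.indicator_apply]
      refine if_congr ?_ rfl rfl
      simp only [hA, mem_iUnion, mem_setOf_eq, mem_preimage, gridPt, hρdef]
      tauto
    calc ∫⁻ ω, kolmCap ((fun u => X u ω) '' F) ε ∂P
        ≤ ∫⁻ ω, ∑' z : Fin d → ℤ, (A z).indicator (fun _ => (1:ℝ≥0∞)) ω ∂P :=
          lintegral_mono_ae hae
      _ = ∑' z : Fin d → ℤ, ∫⁻ ω, (A z).indicator (fun _ => (1:ℝ≥0∞)) ω ∂P :=
          lintegral_tsum fun z => (measurable_const.indicator (hAmeas z)).aemeasurable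
      _ = ∑' z : Fin d → ℤ, P (A z) := by
          refine tsum_congr fun z => ?_
          exact lintegral_indicator_one (hAmeas z)
  set An : (Fin d → ℤ) → ℕ → Set Ω :=
    fun z nn => ⋃ (i : ℕ) (_ : i ≤ nn), (X (eD i)) ⁻¹' (Metric.ball (gridPt d ε z) ρ) with hAn
  have hAeq : ∀ z, A z = ⋃ nn, An z nn := by
    intro z
    ext ω
    simp only [hA, hAn, mem_iUnion, mem_preimage]
    constructor
    · rintro ⟨u, huD, hball⟩
      rw [heD] at huD
      obtain ⟨i, rfl⟩ := huD
      exact ⟨i, i, le_rfl, hball⟩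
    · rintro ⟨nn, i, hin, hball⟩
      exact ⟨eD i, by rw [heD]; exact mem_range_self i, hball⟩
  have hAnmono : ∀ z, Monotone (An z) := by
    intro z n1 n2 h12
    intro ω hω
    simp only [hAn, mem_iUnion, mem_preimage] at hω ⊢
    obtain ⟨i, hi, hb⟩ := hω
    exact ⟨i, le_trans hi h12, hb⟩
  suffices hcore : ∀ (S : Finset (Fin d → ℤ)) (nn : ℕ),
      ENNReal.ofReal β * ∑ z ∈ S, P (An z nn) ≤ 2 ^ (2*d+1) by
    calc ENNReal.ofReal β * ∫⁻ ω, kolmCap ((fun u => X u ω) '' F) ε ∂P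
        ≤ ENNReal.ofReal β * ∑' z : Fin d → ℤ, P (A z) := mul_le_mul_right hlint _
      _ ≤ 2 ^ (2*d+1) := by
          rw [ENNReal.tsum_eq_iSup_sum, ENNReal.mul_iSup]
          refine iSup_le fun S => ?_
          have hsum : ∑ z ∈ S, P (A z) = ⨆ nn, ∑ z ∈ S, P (An z nn) := by
            rw [← ENNReal.finsetSum_iSup_of_monotone
              (fun z => fun n1 n2 h12 => measure_mono (hAnmono z h12))]
            refine Finset.sum_congr rfl fun z _ => ?_
            rw [hAeq z, (hAnmono z).measure_iUnion]
          rw [hsum, ENNReal.mul_iSup]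
          exact iSup_le fun nn => hcore S nn
  intro S n
  -- sorted finite time set
  set T : Finset ℝ := (Finset.range (n+1)).image eD with hTdef
  have hTD : ∀ τ ∈ T, τ ∈ D := by
    intro τ hτ
    obtain ⟨i, _, rfl⟩ := Finset.mem_image.1 hτ
    rw [heD]
    exact mem_range_self i
  set m : ℕ := T.card with hm
  set t : Fin m → ℝ := fun k => ((T.orderIsoOfFin hm.symm k : ℝ)) with htdef
  have htT : ∀ k, t k ∈ T := fun k => (T.orderIsoOfFin hm.symm k).2
  have htF : ∀ k, t k ∈ F := fun k => hDF (hTD _ (htT k))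
  have ht0 : ∀ k, 0 ≤ t k := fun k => hF (htF k)
  have htmono : Monotone t := by
    intro a b hab
    exact Subtype.coe_le_coe.2 ((T.orderIsoOfFin hm.symm).monotone hab)
  -- first-entrance decomposition
  have hAnEv : ∀ z, An z n = ⋃ k : Fin m, entrEv X ε t z k := by
    intro z
    apply Set.Subset.antisymm
    · intro ω hω
      simp only [hAn, mem_iUnion, mem_preimage] at hω
      obtain ⟨i, hin, hball⟩ := hω
      have hiT : eD i ∈ T := Finset.mem_image.2 ⟨i, Finset.mem_range.2 (by omega), rfl⟩
      set k0 : Fin m := (T.orderIsoOfFin hm.symm).symm ⟨eD i, hiT⟩ with hk0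
      have hk0t : t k0 = eD i := by
        rw [htdef]
        simp only [hk0]
        rw [OrderIso.apply_symm_apply]
      set Q : Finset (Fin m) :=
        Finset.univ.filter (fun k => X (t k) ω ∈ Metric.ball (gridPt d ε z) ρ) with hQ
      have hQne : Q.Nonempty :=
        ⟨k0, Finset.mem_filter.2 ⟨Finset.mem_univ _, by rw [hk0t]; exact hball⟩⟩
      refine mem_iUnion.2 ⟨Q.min' hQne, ?_, ?_⟩
      · exact (Finset.mem_filter.1 (Q.min'_mem hQne)).2
      · intro j hjK hcon
        have hjQ : j ∈ Q := Finset.mem_filter.2 ⟨Finset.mem_univ _, hcon⟩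
        exact absurd (Q.min'_le j hjQ) (not_le.2 hjK)
    · intro ω hω
      obtain ⟨k, hk⟩ := mem_iUnion.1 hω
      obtain ⟨i, hin, hei⟩ := Finset.mem_image.1 (htT k)
      simp only [hAn, mem_iUnion, mem_preimage]
      exact ⟨i, Nat.lt_succ_iff.1 (Finset.mem_range.1 hin), by rw [hei]; exact hk.1⟩
  have hPAn : ∀ z, P (An z n) = ∑ k : Fin m, P (entrEv X ε t z k) := by
    intro z
    rw [hAnEv z, measure_iUnion (fun k k' hkk => entrEv_disj X ε t z hkk)
      (fun k => entrEv_meas hX.meas ε t z k), tsum_fintype]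
  set W : ℝ≥0∞ := ∑ z ∈ S, ∑ k : Fin m, P (entrEv X ε t z k) with hWdef
  rw [show ∑ z ∈ S, P (An z n) = W from Finset.sum_congr rfl fun z _ => hPAn z]
  rcases eq_or_ne W 0 with hW0 | hWne
  · rw [hW0, mul_zero]
    exact zero_le
  have hWtop : W ≠ ∞ := by
    rw [hWdef]
    exact ENNReal.sum_ne_top.2 fun z _ => ENNReal.sum_ne_top.2 fun k _ => measure_ne_top P _
  set cr : (Fin d → ℤ) × Fin m → ℝ := fun a => (P (entrEv X ε t a.1 a.2)).toReal with hcrdef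
  set I : Finset ((Fin d → ℤ) × Fin m) := S ×ˢ Finset.univ with hIdef
  have hWI : W = ∑ a ∈ I, P (entrEv X ε t a.1 a.2) := by
    rw [hIdef, Finset.sum_product]
  set Wr : ℝ := W.toReal with hWrdef
  have hWrsum : Wr = ∑ a ∈ I, cr a := by
    rw [hWrdef, hWI, ENNReal.toReal_sum (fun a _ => measure_ne_top P _)]
  have hWrpos : 0 < Wr := ENNReal.toReal_pos hWne hWtop
  have hcrnn : ∀ a, 0 ≤ cr a := fun a => ENNReal.toReal_nonneg
  set κr : ℝ → ℝ := kappa P X ε with hκrdef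
  have hκnn : ∀ u, 0 ≤ κr u := fun u => ENNReal.toReal_nonneg
  -- the empirical probability measure
  set μm : Measure ℝ :=
    W⁻¹ • ∑ a ∈ I, P (entrEv X ε t a.1 a.2) • Measure.dirac (t a.2) with hμmdef
  have hμsum_univ :
      (∑ a ∈ I, P (entrEv X ε t a.1 a.2) • Measure.dirac (t a.2)) Set.univ = W := by
    rw [Measure.finset_sum_apply, hWI]
    refine Finset.sum_congr rfl fun a _ => ?_
    rw [Measure.smul_apply, measure_univ, smul_eq_mul, mul_one]
  haveI hμprob : IsProbabilityMeasure μm := by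
    constructor
    rw [hμmdef, Measure.smul_apply, hμsum_univ, smul_eq_mul,
      ENNReal.inv_mul_cancel hWne hWtop]
  have hμF : μm F = 1 := by
    have hsF : (∑ a ∈ I, P (entrEv X ε t a.1 a.2) • Measure.dirac (t a.2)) F = W := by
      rw [Measure.finset_sum_apply, hWI]
      refine Finset.sum_congr rfl fun a _ => ?_
      rw [Measure.smul_apply, Measure.dirac_apply_of_mem (htF a.2), smul_eq_mul, mul_one]
    rw [hμmdef, Measure.smul_apply, hsF, smul_eq_mul, ENNReal.inv_mul_cancel hWne hWtop]
  have hint : ∀ f : ℝ → ℝ, ∫ x, f x ∂μm = Wr⁻¹ * ∑ a ∈ I, cr a * f (t a.2) := by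
    intro f
    rw [hμmdef, integral_smul_measure,
      integral_finset_smul_dirac I _ (fun a _ => measure_ne_top P _) (fun a => t a.2) f,
      ENNReal.toReal_inv, smul_eq_mul]
  have hdouble : ∫ t', ∫ s', kappa P X ε |s' - t'| ∂μm ∂μm
      = Wr⁻¹ * ∑ b ∈ I, cr b * (Wr⁻¹ * ∑ a ∈ I, cr a * κr |t a.2 - t b.2|) := by
    rw [hint fun t' => ∫ s', kappa P X ε |s' - t'| ∂μm]
    congr 1
    refine Finset.sum_congr rfl fun b _ => ?_
    rw [hint fun s' => kappa P X ε |s' - t b.2|]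
  have hβle : β ≤ Wr⁻¹ * ∑ b ∈ I, cr b * (Wr⁻¹ * ∑ a ∈ I, cr a * κr |t a.2 - t b.2|) := by
    rw [← hdouble, hβdef]
    refine ciInf_le ⟨0, ?_⟩ (⟨μm, hμprob, hμF⟩ : ↥(ProbOn F))
    rintro x ⟨ν, rfl⟩
    exact integral_nonneg fun t' => integral_nonneg fun s' => ENNReal.toReal_nonneg
  -- core estimate, real version
  have hfiltprod : ∀ b : (Fin d → ℤ) × Fin m,
      I.filter (fun a => t a.2 ≤ t b.2)
        = S ×ˢ (Finset.univ.filter fun k : Fin m => t k ≤ t b.2) := by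
    intro b
    ext a
    simp only [hIdef, Finset.mem_filter, Finset.mem_product, Finset.mem_univ, true_and]
    tauto
  have hcoreR : ∀ b ∈ I, ∑ a ∈ I.filter (fun a => t a.2 ≤ t b.2),
      cr a * κr (t b.2 - t a.2) ≤ 2 ^ (2*d) := by
    intro b _
    have hcb := core_bound P X hX hε t ht0 htmono S (t b.2)
    have h1 : ∑ a ∈ I.filter (fun a => t a.2 ≤ t b.2), cr a * κr (t b.2 - t a.2)
        = (∑ z ∈ S, ∑ k ∈ Finset.univ.filter (fun k : Fin m => t k ≤ t b.2),
            P (entrEv X ε t z k) * P {ω | X (t b.2 - t k) ω ∈ Metric.ball 0 ε}).toReal := by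
      rw [hfiltprod b, Finset.sum_product,
        ENNReal.toReal_sum (fun z _ => ENNReal.sum_ne_top.2 fun k _ =>
          ENNReal.mul_ne_top (measure_ne_top P _) (measure_ne_top P _))]
      refine Finset.sum_congr rfl fun z _ => ?_
      rw [ENNReal.toReal_sum (fun k _ =>
        ENNReal.mul_ne_top (measure_ne_top P _) (measure_ne_top P _))]
      refine Finset.sum_congr rfl fun k _ => ?_
      rw [ENNReal.toReal_mul]
      rfl
    rw [h1]
    have h2 := ENNReal.toReal_mono (by
      exact ENNReal.pow_ne_top (by simp : (2:ℝ≥0∞) ≠ ∞)) hcb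
    calc (∑ z ∈ S, ∑ k ∈ Finset.univ.filter (fun k : Fin m => t k ≤ t b.2),
            P (entrEv X ε t z k) * P {ω | X (t b.2 - t k) ω ∈ Metric.ball 0 ε}).toReal
        ≤ ((2:ℝ≥0∞) ^ (2*d)).toReal := h2
      _ = 2 ^ (2*d) := by rw [ENNReal.toReal_pow, ENNReal.toReal_ofNat]
  -- bound the symmetric double sum
  have hQr : ∑ b ∈ I, cr b * (∑ a ∈ I, cr a * κr |t a.2 - t b.2|)
      ≤ 2 ^ (2*d+1) * Wr := by
    have hsplit : ∀ b ∈ I, ∑ a ∈ I, cr a * κr |t a.2 - t b.2|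
        = (∑ a ∈ I.filter (fun a => t a.2 ≤ t b.2), cr a * κr |t a.2 - t b.2|)
          + ∑ a ∈ I.filter (fun a => ¬ t a.2 ≤ t b.2), cr a * κr |t a.2 - t b.2| :=
      fun b _ => (Finset.sum_filter_add_sum_filter_not I _ _).symm
    have habs1 : ∀ b ∈ I, ∑ a ∈ I.filter (fun a => t a.2 ≤ t b.2), cr a * κr |t a.2 - t b.2|
        = ∑ a ∈ I.filter (fun a => t a.2 ≤ t b.2), cr a * κr (t b.2 - t a.2) := by
      intro b _
      refine Finset.sum_congr rfl fun a ha => ?_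
      rw [abs_sub_comm, abs_of_nonneg (sub_nonneg.2 (Finset.mem_filter.1 ha).2)]
    have hpart1 : ∑ b ∈ I, cr b * (∑ a ∈ I.filter (fun a => t a.2 ≤ t b.2),
        cr a * κr |t a.2 - t b.2|) ≤ 2 ^ (2*d) * Wr := by
      calc ∑ b ∈ I, cr b * (∑ a ∈ I.filter (fun a => t a.2 ≤ t b.2), cr a * κr |t a.2 - t b.2|)
          ≤ ∑ b ∈ I, cr b * (2 ^ (2*d)) := by
            refine Finset.sum_le_sum fun b hb => ?_
            refine mul_le_mul_of_nonneg_left ?_ (hcrnn b)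
            rw [habs1 b hb]
            exact hcoreR b hb
        _ = 2 ^ (2*d) * Wr := by rw [← Finset.sum_mul, ← hWrsum, mul_comm]
    have hswap : ∑ b ∈ I, cr b * (∑ a ∈ I.filter (fun a => ¬ t a.2 ≤ t b.2),
          cr a * κr |t a.2 - t b.2|)
        = ∑ a ∈ I, cr a * (∑ b ∈ I.filter (fun b => ¬ t a.2 ≤ t b.2),
          cr b * κr |t a.2 - t b.2|) := by
      simp_rw [Finset.mul_sum, Finset.sum_filter]
      rw [Finset.sum_comm]
      refine Finset.sum_congr rfl fun a _ => Finset.sum_congr rfl fun b _ => ?_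
      split_ifs
      · ring
      · ring
    have hpart2 : ∑ b ∈ I, cr b * (∑ a ∈ I.filter (fun a => ¬ t a.2 ≤ t b.2),
        cr a * κr |t a.2 - t b.2|) ≤ 2 ^ (2*d) * Wr := by
      rw [hswap]
      calc ∑ a ∈ I, cr a * (∑ b ∈ I.filter (fun b => ¬ t a.2 ≤ t b.2),
            cr b * κr |t a.2 - t b.2|)
          ≤ ∑ a ∈ I, cr a * (2 ^ (2*d)) := by
            refine Finset.sum_le_sum fun a ha => ?_
            refine mul_le_mul_of_nonneg_left ?_ (hcrnn a)
            have he1 : ∑ b ∈ I.filter (fun b => ¬ t a.2 ≤ t b.2), cr b * κr |t a.2 - t b.2|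
                = ∑ b ∈ I.filter (fun b => ¬ t a.2 ≤ t b.2), cr b * κr (t a.2 - t b.2) := by
              refine Finset.sum_congr rfl fun b hb => ?_
              have hblt := (Finset.mem_filter.1 hb).2
              rw [abs_of_nonneg (sub_nonneg.2 (le_of_lt (not_le.1 hblt)))]
            rw [he1]
            calc ∑ b ∈ I.filter (fun b => ¬ t a.2 ≤ t b.2), cr b * κr (t a.2 - t b.2)
                ≤ ∑ b ∈ I.filter (fun b => t b.2 ≤ t a.2), cr b * κr (t a.2 - t b.2) := by
                  refine Finset.sum_le_sum_of_subset_of_nonneg ?_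
                    (fun b _ _ => mul_nonneg (hcrnn b) (hκnn _))
                  intro b hb
                  rw [Finset.mem_filter] at hb ⊢
                  exact ⟨hb.1, le_of_lt (not_le.1 hb.2)⟩
              _ ≤ 2 ^ (2*d) := hcoreR a ha
        _ = 2 ^ (2*d) * Wr := by rw [← Finset.sum_mul, ← hWrsum, mul_comm]
    calc ∑ b ∈ I, cr b * (∑ a ∈ I, cr a * κr |t a.2 - t b.2|)
        = ∑ b ∈ I, cr b * (∑ a ∈ I.filter (fun a => t a.2 ≤ t b.2), cr a * κr |t a.2 - t b.2|)
          + ∑ b ∈ I, cr b * (∑ a ∈ I.filter (fun a => ¬ t a.2 ≤ t b.2),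
            cr a * κr |t a.2 - t b.2|) := by
          rw [← Finset.sum_add_distrib]
          refine Finset.sum_congr rfl fun b hb => ?_
          rw [hsplit b hb, mul_add]
      _ ≤ 2 ^ (2*d) * Wr + 2 ^ (2*d) * Wr := add_le_add hpart1 hpart2
      _ = 2 ^ (2*d+1) * Wr := by ring
  -- final arithmetic
  have hβWr : β * Wr ≤ 2 ^ (2*d+1) := by
    have h1 : ∑ b ∈ I, cr b * (Wr⁻¹ * ∑ a ∈ I, cr a * κr |t a.2 - t b.2|)
        = Wr⁻¹ * ∑ b ∈ I, cr b * (∑ a ∈ I, cr a * κr |t a.2 - t b.2|) := by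
      rw [Finset.mul_sum]
      refine Finset.sum_congr rfl fun b _ => ?_
      ring
    have h2 : β ≤ Wr⁻¹ * (Wr⁻¹ * (2 ^ (2*d+1) * Wr)) := by
      refine hβle.trans ?_
      rw [h1]
      have hmono2 : Wr⁻¹ * ∑ b ∈ I, cr b * (∑ a ∈ I, cr a * κr |t a.2 - t b.2|)
          ≤ Wr⁻¹ * (2 ^ (2*d+1) * Wr) :=
        mul_le_mul_of_nonneg_left hQr (by positivity)
      exact mul_le_mul_of_nonneg_left hmono2 (by positivity)
    have h3 : Wr⁻¹ * (Wr⁻¹ * (2 ^ (2*d+1) * Wr)) = 2 ^ (2*d+1) / Wr := by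
      field_simp
    rw [h3] at h2
    rw [← le_div_iff₀ hWrpos]
    exact h2
  have hWofReal : W = ENNReal.ofReal Wr := by
    rw [hWrdef, ENNReal.ofReal_toReal hWtop]
  rw [hWofReal, ← ENNReal.ofReal_mul (le_of_lt hβpos)]
  calc ENNReal.ofReal (β * Wr) ≤ ENNReal.ofReal ((2:ℝ) ^ (2*d+1)) :=
        ENNReal.ofReal_le_ofReal hβWr
    _ = 2 ^ (2*d+1) := by
        rw [ENNReal.ofReal_pow (by norm_num : (0:ℝ) ≤ 2)]
        norm_num

end
end
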